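/- arXiv:2306.07619 — 8 statements merged into one kernel-verified Lean document; each statement's English description precedes it below -/
import Mathlib

section
/- For the spline kernel K(u) = exp(-|u|)/2, the asymptotic variance constant of the local linear density estimator at the right boundary, V_{1,K} = e_1' A_{1,K}^{-1} B_{1,K} A_{1,K}^{-1} e_1 with e_1 = (0,1)', equals 1/4, where B_{1,K} = ∫_{-∞}^0 ∫_{-∞}^0 min{u,v} r_1(u) r_1(v)' K(u) K(v) du dv. -/
/-!
On `(-∞, 0)` the kernel is `exp u / 2`, so every entry of `A` and `B` reduces to moments
`∫_{-∞}^0 x ^ n exp (c x) dx = (-1)ⁿ n! / c ^ (n + 1)` (a Gamma integral after `x ↦ -x`).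
For `B`, the inner integral splits at `v = u` into `∫_{v<u} v g(v) dv + u ∫_u^0 g`, both evaluated
by explicit antiderivatives. This gives `A = !![1/2, -1/2; -1/2, 1]`,
`B = !![-3/8, 9/16; 9/16, -11/16]` and `A⁻¹ = !![4, 2; 2, 2]`, whence `V = (2, 2) B (2, 2)' = 1/4`.
-/

open MeasureTheory Matrix
open Set Filter Real Topology
open scoped Nat

theorem integral_Iio_zero_pow_mul_exp_mul {c : ℝ} (hc : 0 < c) (n : ℕ) :
    ∫ x in Iio 0, x ^ n * exp (c * x) = (-1) ^ n * n ! / c ^ (n + 1) := by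
  have hneg : ∀ x ∈ Ioi (0 : ℝ), (-x) ^ n * exp (c * -x)
      = (-1) ^ n * (x ^ ((n + 1 : ℝ) - 1) * exp (-(c * x))) := fun x _ ↦ by
    rw [add_sub_cancel_right, rpow_natCast, neg_pow, mul_neg]
    ring
  rw [← integral_Iic_eq_integral_Iio, ← neg_zero, ← integral_comp_neg_Ioi,
    setIntegral_congr_fun measurableSet_Ioi hneg, integral_const_mul,
    integral_rpow_mul_exp_neg_mul_Ioi (by positivity) hc, Gamma_nat_eq_factorial,
    ← Nat.cast_add_one, rpow_natCast, _root_.one_div_pow]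
  ring

theorem integrableOn_Iio_zero_pow_mul_exp_mul {c : ℝ} (hc : 0 < c) (n : ℕ) :
    IntegrableOn (fun x ↦ x ^ n * exp (c * x)) (Iio 0) :=
  .of_integral_ne_zero <| by
    rw [integral_Iio_zero_pow_mul_exp_mul hc]
    have := n.factorial_pos
    positivity

theorem integral_Iio_zero_pow_mul_exp (n : ℕ) :
    ∫ x in Iio 0, x ^ n * exp x = (-1) ^ n * n ! := by
  simpa using integral_Iio_zero_pow_mul_exp_mul one_pos n

theorem integrableOn_Iio_zero_pow_mul_exp (n : ℕ) :
    IntegrableOn (fun x ↦ x ^ n * exp x) (Iio 0) := by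
  simpa using integrableOn_Iio_zero_pow_mul_exp_mul one_pos n

theorem tendsto_pow_mul_exp_atBot_nhds_zero (n : ℕ) :
    Tendsto (fun x : ℝ ↦ x ^ n * exp x) atBot (𝓝 0) := by
  have h := ((tendsto_pow_mul_exp_neg_atTop_nhds_zero n).comp tendsto_neg_atBot_atTop).const_mul
    ((-1 : ℝ) ^ n)
  rw [mul_zero] at h
  refine h.congr fun x ↦ ?_
  rw [Function.comp_apply, neg_neg, neg_pow x, ← mul_assoc, ← mul_assoc, ← mul_pow]
  norm_num

theorem integral_Iio_zero_min_mul {g G H : ℝ → ℝ} {u : ℝ} (hu : u ≤ 0)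
    (hG : ∀ x, HasDerivAt G (g x) x) (hH : ∀ x, HasDerivAt H (x * g x) x)
    (hg : Continuous g) (hint : IntegrableOn (fun x ↦ x * g x) (Iio 0))
    (hH_bot : Tendsto H atBot (𝓝 0)) :
    ∫ v in Iio 0, min u v * g v = H u + u * (G 0 - G u) := by
  have below : EqOn (fun v ↦ min u v * g v) (fun v ↦ v * g v) (Iio u) := fun v hv ↦ by
    simp only [min_eq_right (mem_Iio.1 hv).le]
  have above : EqOn (fun v ↦ min u v * g v) (fun v ↦ u * g v) (Ico u 0) := fun v hv ↦ by
    simp only [min_eq_left hv.1]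
  have hint_below : IntegrableOn (fun v ↦ v * g v) (Iic u) :=
    (integrableOn_Iic_iff_integrableOn_Iio).2 (hint.mono_set (Iio_subset_Iio hu))
  rw [← Iio_union_Ico_eq_Iio hu,
    setIntegral_union ((Iio_disjoint_Ici le_rfl).mono_right Ico_subset_Ici_self) measurableSet_Ico
      ((hint.mono_set (Iio_subset_Iio hu)).congr_fun below.symm measurableSet_Iio)
      ((Continuous.integrableOn_Icc (by fun_prop)).mono_set Ico_subset_Icc_self),
    setIntegral_congr_fun measurableSet_Iio below, setIntegral_congr_fun measurableSet_Ico above,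
    integral_const_mul, ← integral_Iic_eq_integral_Iio,
    integral_Iic_of_hasDerivAt_of_tendsto' (fun x _ ↦ hH x) hint_below hH_bot,
    integral_Ico_eq_integral_Ioo, ← integral_Ioc_eq_integral_Ioo,
    ← intervalIntegral.integral_of_le hu,
    intervalIntegral.integral_eq_sub_of_hasDerivAt (fun x _ ↦ hG x) (hg.intervalIntegrable _ _),
    sub_zero]

theorem hasDerivAt_sub_one_mul_exp (x : ℝ) :
    HasDerivAt (fun x ↦ (x - 1) * exp x) (x * exp x) x :=
  (((hasDerivAt_id' x).sub_const 1).mul (hasDerivAt_exp x)).congr_deriv (by ring)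

theorem integral_Iio_zero_min_mul_exp {u : ℝ} (hu : u ≤ 0) :
    ∫ v in Iio 0, min u v * exp v = u - exp u := by
  have hH_bot : Tendsto (fun x ↦ (x - 1) * exp x) atBot (𝓝 0) := by
    simpa [sub_mul] using
      (tendsto_pow_mul_exp_atBot_nhds_zero 1).sub (tendsto_pow_mul_exp_atBot_nhds_zero 0)
  rw [integral_Iio_zero_min_mul hu hasDerivAt_exp hasDerivAt_sub_one_mul_exp continuous_exp
    (by simpa using integrableOn_Iio_zero_pow_mul_exp 1) hH_bot, exp_zero]
  ring

theorem integral_Iio_zero_min_mul_mul_exp {u : ℝ} (hu : u ≤ 0) :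
    ∫ v in Iio 0, min u v * (v * exp v) = (2 - u) * exp u - u := by
  have hH : ∀ x, HasDerivAt (fun x ↦ (x ^ 2 - 2 * x + 2) * exp x) (x * (x * exp x)) x := fun x ↦
    (((((hasDerivAt_pow 2 x).sub ((hasDerivAt_id' x).const_mul 2)).add_const 2).mul
      (hasDerivAt_exp x))).congr_deriv (by simp only [Pi.sub_apply]; ring)
  have hH_bot : Tendsto (fun x ↦ (x ^ 2 - 2 * x + 2) * exp x) atBot (𝓝 0) := by
    have := ((tendsto_pow_mul_exp_atBot_nhds_zero 2).sub
      ((tendsto_pow_mul_exp_atBot_nhds_zero 1).const_mul 2)).add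
      ((tendsto_pow_mul_exp_atBot_nhds_zero 0).const_mul 2)
    simp only [mul_zero, sub_zero, add_zero] at this
    exact this.congr fun x ↦ by ring
  have hint : IntegrableOn (fun x ↦ x * (x * exp x)) (Iio 0) :=
    (integrableOn_Iio_zero_pow_mul_exp 2).congr_fun (fun x _ ↦ by ring) measurableSet_Iio
  rw [integral_Iio_zero_min_mul hu hasDerivAt_sub_one_mul_exp hH
    (continuous_id.mul continuous_exp) hint hH_bot, exp_zero]
  ring

noncomputable def splineKernel (u : ℝ) : ℝ := exp (-|u|) / 2

theorem splineKernel_of_neg {u : ℝ} (hu : u < 0) : splineKernel u = exp u / 2 := by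
  rw [splineKernel, abs_of_neg hu, neg_neg]

theorem integral_Iio_zero_pow_mul_splineKernel (n : ℕ) :
    ∫ u in Iio 0, u ^ n * splineKernel u = (-1) ^ n * n ! / 2 := by
  rw [← integral_Iio_zero_pow_mul_exp, ← integral_div]
  refine setIntegral_congr_fun measurableSet_Iio fun u hu ↦ ?_
  rw [splineKernel_of_neg hu, mul_div_assoc]

noncomputable def splineB (i j : ℕ) : ℝ :=
  ∫ u in Iio 0, ∫ v in Iio 0, min u v * u ^ i * v ^ j * splineKernel u * splineKernel v

theorem integral_Iio_zero_min_mul_splineKernel (i j : ℕ) {u : ℝ} (hu : u < 0) :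
    ∫ v in Iio 0, min u v * u ^ i * v ^ j * splineKernel u * splineKernel v
      = u ^ i * exp u / 4 * ∫ v in Iio 0, min u v * (v ^ j * exp v) := by
  rw [← integral_const_mul]
  refine setIntegral_congr_fun measurableSet_Iio fun v hv ↦ ?_
  rw [splineKernel_of_neg hu, splineKernel_of_neg hv]
  ring

theorem splineB_zero_right (i : ℕ) :
    splineB i 0 = ((-1) ^ (i + 1) * (i + 1)! - (-1) ^ i * i ! / 2 ^ (i + 1) : ℝ) / 4 := by
  have h : EqOn (fun u ↦ ∫ v in Iio 0,
        min u v * u ^ i * v ^ 0 * splineKernel u * splineKernel v)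
      (fun u ↦ (u ^ (i + 1) * exp u - u ^ i * exp (2 * u)) / 4) (Iio 0) := fun u hu ↦ by
    dsimp only
    rw [integral_Iio_zero_min_mul_splineKernel i 0 hu]
    simp only [pow_zero, one_mul]
    rw [integral_Iio_zero_min_mul_exp (mem_Iio.1 hu).le, two_mul u, exp_add]
    ring
  rw [splineB, setIntegral_congr_fun measurableSet_Iio h, integral_div,
    integral_sub (integrableOn_Iio_zero_pow_mul_exp _)
      (integrableOn_Iio_zero_pow_mul_exp_mul two_pos _),
    integral_Iio_zero_pow_mul_exp, integral_Iio_zero_pow_mul_exp_mul two_pos]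

theorem splineB_one_right (i : ℕ) :
    splineB i 1 = (2 * ((-1) ^ i * i ! / 2 ^ (i + 1)) - (-1) ^ (i + 1) * (i + 1)! / 2 ^ (i + 2)
        - (-1) ^ (i + 1) * (i + 1)! : ℝ) / 4 := by
  have h : EqOn (fun u ↦ ∫ v in Iio 0,
        min u v * u ^ i * v ^ 1 * splineKernel u * splineKernel v)
      (fun u ↦ (2 * (u ^ i * exp (2 * u)) - u ^ (i + 1) * exp (2 * u)
        - u ^ (i + 1) * exp u) / 4) (Iio 0) := fun u hu ↦ by
    dsimp only
    rw [integral_Iio_zero_min_mul_splineKernel i 1 hu]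
    simp only [pow_one]
    rw [integral_Iio_zero_min_mul_mul_exp (mem_Iio.1 hu).le, two_mul u, exp_add]
    ring
  have h2 := integrableOn_Iio_zero_pow_mul_exp_mul two_pos
  rw [splineB, setIntegral_congr_fun measurableSet_Iio h, integral_div,
    integral_sub (((h2 i).const_mul _).sub' (h2 _)) (integrableOn_Iio_zero_pow_mul_exp _),
    integral_sub ((h2 i).const_mul _) (h2 _), integral_const_mul,
    integral_Iio_zero_pow_mul_exp, integral_Iio_zero_pow_mul_exp_mul two_pos,
    integral_Iio_zero_pow_mul_exp_mul two_pos]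

/-- For the spline kernel `K u = exp (-|u|)/2`, the asymptotic variance constant
`V_{1,K} = e₁' A_{1,K}⁻¹ B_{1,K} A_{1,K}⁻¹ e₁` of the local linear density estimator at the
right boundary equals `1/4`. -/
theorem spline_variance_constant :
    let K : ℝ → ℝ := fun u => Real.exp (-|u|) / 2
    let A : Matrix (Fin 2) (Fin 2) ℝ :=
      Matrix.of fun i j => ∫ u in Set.Iio (0 : ℝ), u ^ ((i : ℕ) + (j : ℕ)) * K u
    let B : Matrix (Fin 2) (Fin 2) ℝ :=
      Matrix.of fun i j => ∫ u in Set.Iio (0 : ℝ), ∫ v in Set.Iio (0 : ℝ),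
        min u v * u ^ (i : ℕ) * v ^ (j : ℕ) * K u * K v
    let e1 : Fin 2 → ℝ := ![0, 1]
    e1 ⬝ᵥ ((A⁻¹ * B * A⁻¹) *ᵥ e1) = 1/4 := by
  intro K A B e1
  have hA : A = !![1/2, -1/2; -1/2, 1] := by
    ext i j
    fin_cases i <;> fin_cases j <;>
      exact (integral_Iio_zero_pow_mul_splineKernel _).trans (by norm_num)
  have hB : B = !![-3/8, 9/16; 9/16, -11/16] := by
    ext i j
    fin_cases i <;> fin_cases j
    · exact (splineB_zero_right 0).trans (by norm_num)
    · exact (splineB_one_right 0).trans (by norm_num)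
    · exact (splineB_zero_right 1).trans (by norm_num [Nat.factorial])
    · exact (splineB_one_right 1).trans (by norm_num [Nat.factorial])
  have hA_inv : (!![1/2, -1/2; -1/2, 1] : Matrix (Fin 2) (Fin 2) ℝ)⁻¹ = !![4, 2; 2, 2] :=
    inv_eq_right_inv (by rw [one_fin_two]; norm_num [mul_fin_two])
  rw [hA, hB, hA_inv]
  norm_num [mul_fin_two, e1, vecHead, vecTail]
end

section
/- For the uniform kernel K(u) = (1/2)·1{u² < 1}, the asymptotic variance constant V_{1,K} = e_1' A_{1,K}^{-1} B_{1,K} A_{1,K}^{-1} e_1 of the local linear density estimator equals 6/5. -/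
/-!
On `(-∞, 0)` the uniform kernel is `1/2` on `(-1, 0)`, so every entry of `A` and `B` is a
polynomial integral over `[-1, 0]`; for the double integral one first splits the inner integral
at `v = u`, where `min u v` switches from `v` to `u`. This gives
`A = !![1/2, -1/4; -1/4, 1/6]`, `A⁻¹ = !![8, 12; 12, 24]` and
`B = !![-1/6, 3/32; 3/32, -1/20]`, and the `(1,1)` entry of `A⁻¹ B A⁻¹` is `6/5`.
-/

open MeasureTheory Matrix

noncomputable def uniformKernel (u : ℝ) : ℝ := if u ^ 2 < 1 then 1 / 2 else 0

theorem integral_neg_one_zero_pow (n : ℕ) : ∫ x in (-1 : ℝ)..0, x ^ n = (-1) ^ n / (n + 1) := by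
  rw [integral_pow]
  simp [pow_succ]

theorem intervalIntegral_min_mul {f : ℝ → ℝ} {a b u : ℝ} (hf : IntervalIntegrable f volume a b)
    (hau : a ≤ u) (hub : u ≤ b) :
    ∫ v in a..b, min u v * f v = (∫ v in a..u, v * f v) + u * ∫ v in u..b, f v := by
  have hmin : IntervalIntegrable (fun v => min u v * f v) volume a b :=
    hf.continuousOn_mul (by fun_prop)
  have hu : u ∈ Set.uIcc a b := Set.mem_uIcc_of_le hau hub
  rw [← intervalIntegral.integral_add_adjacent_intervals
      (hmin.mono_set (Set.uIcc_subset_uIcc_left hu))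
      (hmin.mono_set (Set.uIcc_subset_uIcc_right hu)),
    ← intervalIntegral.integral_const_mul]
  congr 1
  · refine intervalIntegral.integral_congr fun v hv => ?_
    rw [Set.uIcc_of_le hau] at hv
    simp only [min_eq_right hv.2]
  · refine intervalIntegral.integral_congr fun v hv => ?_
    rw [Set.uIcc_of_le hub] at hv
    simp only [min_eq_left hv.1]

theorem setIntegral_Iio_zero_mul_uniformKernel (f : ℝ → ℝ) :
    ∫ u in Set.Iio (0 : ℝ), f u * uniformKernel u = (∫ u in (-1 : ℝ)..0, f u) / 2 := by
  have hK : (fun u => f u * uniformKernel u)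
      = (Set.Ioo (-1 : ℝ) 1).indicator (fun u => f u / 2) := by
    ext u
    simp only [uniformKernel, Set.indicator_apply, Set.mem_Ioo, ← abs_lt, sq_lt_one_iff_abs_lt_one]
    split_ifs <;> ring
  have hsupp : Set.Iio (0 : ℝ) ∩ Set.Ioo (-1) 1 = Set.Ioo (-1) 0 := by
    rw [Set.inter_comm, Set.Ioo_inter_Iio, min_eq_right zero_le_one]
  rw [hK, setIntegral_indicator measurableSet_Ioo, hsupp, ← integral_Ioc_eq_integral_Ioo,
    ← intervalIntegral.integral_of_le (by norm_num), intervalIntegral.integral_div]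

theorem setIntegral_Iio_zero_pow_mul_uniformKernel (n : ℕ) :
    ∫ u in Set.Iio (0 : ℝ), u ^ n * uniformKernel u = (-1) ^ n / (n + 1) / 2 := by
  rw [setIntegral_Iio_zero_mul_uniformKernel, integral_neg_one_zero_pow]

theorem integral_neg_one_zero_min_mul_pow {u : ℝ} (hu₁ : -1 ≤ u) (hu₀ : u ≤ 0) (j : ℕ) :
    ∫ v in (-1 : ℝ)..0, min u v * v ^ j
      = (u ^ (j + 2) - (-1) ^ j) / (j + 2) - u ^ (j + 2) / (j + 1) := by
  rw [intervalIntegral_min_mul (intervalIntegral.intervalIntegrable_pow j) hu₁ hu₀]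
  simp only [← pow_succ', integral_pow]
  push_cast
  field_simp
  ring

theorem setIntegral_Iio_zero_min_mul_pow_mul_uniformKernel (i j : ℕ) :
    ∫ u in Set.Iio (0 : ℝ), ∫ v in Set.Iio (0 : ℝ),
        min u v * u ^ i * v ^ j * uniformKernel u * uniformKernel v
      = -(-1) ^ (i + j)
          * (1 / ((j + 1) * (j + 2) * (i + j + 3)) + 1 / ((i + 1) * (j + 2))) / 4 := by
  have inner : ∀ u, ∫ v in Set.Iio (0 : ℝ),
        min u v * u ^ i * v ^ j * uniformKernel u * uniformKernel v
      = u ^ i * (∫ v in (-1 : ℝ)..0, min u v * v ^ j) / 2 * uniformKernel u := by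
    intro u
    rw [setIntegral_Iio_zero_mul_uniformKernel]
    simp_rw [show ∀ v, min u v * u ^ i * v ^ j * uniformKernel u
        = u ^ i * uniformKernel u * (min u v * v ^ j) from fun v => by ring,
      intervalIntegral.integral_const_mul]
    ring
  have outer : ∀ u ∈ Set.uIcc (-1 : ℝ) 0, u ^ i * (∫ v in (-1 : ℝ)..0, min u v * v ^ j) / 2
      = (1 / (j + 2) - 1 / (j + 1)) / 2 * u ^ (i + j + 2) + -(-1) ^ j / (j + 2) / 2 * u ^ i := by
    intro u hu
    rw [Set.uIcc_of_le (by norm_num)] at hu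
    rw [integral_neg_one_zero_min_mul_pow hu.1 hu.2]
    ring
  simp only [inner]
  rw [setIntegral_Iio_zero_mul_uniformKernel, intervalIntegral.integral_congr outer,
    intervalIntegral.integral_add ((intervalIntegral.intervalIntegrable_pow _).const_mul _)
      ((intervalIntegral.intervalIntegrable_pow _).const_mul _),
    intervalIntegral.integral_const_mul, intervalIntegral.integral_const_mul,
    integral_neg_one_zero_pow, integral_neg_one_zero_pow]
  push_cast
  field_simp
  ring

/-- For the uniform kernel `K u = (1/2)·1{u² < 1}`, the asymptotic variance
constant `V_{1,K} = e₁' A_{1,K}⁻¹ B_{1,K} A_{1,K}⁻¹ e₁` of the local linear density estimator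
equals `6/5`. -/
theorem uniform_variance_constant :
    let K : ℝ → ℝ := fun u => if u ^ 2 < 1 then (1:ℝ)/2 else 0
    let A : Matrix (Fin 2) (Fin 2) ℝ :=
      Matrix.of fun i j => ∫ u in Set.Iio (0 : ℝ), u ^ ((i : ℕ) + (j : ℕ)) * K u
    let B : Matrix (Fin 2) (Fin 2) ℝ :=
      Matrix.of fun i j => ∫ u in Set.Iio (0 : ℝ), ∫ v in Set.Iio (0 : ℝ),
        min u v * u ^ (i : ℕ) * v ^ (j : ℕ) * K u * K v
    let e1 : Fin 2 → ℝ := ![0, 1]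
    e1 ⬝ᵥ ((A⁻¹ * B * A⁻¹) *ᵥ e1) = 6/5 := by
  intro K A B e1
  have hK : K = uniformKernel := rfl
  have hA : A = !![1 / 2, -1 / 4; -1 / 4, 1 / 6] := by
    ext i j
    fin_cases i <;> fin_cases j <;>
      norm_num [A, hK, setIntegral_Iio_zero_pow_mul_uniformKernel]
  have hB : B = !![-1 / 6, 3 / 32; 3 / 32, -1 / 20] := by
    ext i j
    fin_cases i <;> fin_cases j <;>
      norm_num [B, hK, setIntegral_Iio_zero_min_mul_pow_mul_uniformKernel]
  have hA_inv : A⁻¹ = !![8, 12; 12, 24] := by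
    rw [hA]
    refine Matrix.inv_eq_right_inv ?_
    rw [Matrix.one_fin_two]
    norm_num [Matrix.mul_fin_two]
  rw [hA_inv, hB]
  norm_num [e1, Matrix.mul_fin_two, Matrix.mulVec, dotProduct, Fin.sum_univ_two]
end

section
/- Let X_1,…,X_n be i.i.d. with density f bounded below by δ > 0 on its support [x_L, x_R). Let X_{(n-1)} < X_{(n)} denote the two largest order statistics. Then E[ 1/(x_R − X_{(n-1)})² · 1{exactly two observations lie in [x_R−h, x_R)} ] = +∞ for any h ∈ (0, x_R − x_L). -/
/-!
Fix two coordinates `T`. For `ε = h / 2 ^ k`, the box where the coordinates in `T` lie in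
`[x_R - ε, x_R - ε / 2)` and all others in `[x_L, x_R - h)` is contained in the event, and on it
`0 < x_R - X_{(n-1)} ≤ ε`. The box has probability at least `(δ ε / 2)² · c` with `c > 0`
independent of `k`, so it contributes at least `δ² c / 4` to the integral. These boxes are
pairwise disjoint, hence the integral diverges: the divergence is that of `∫ dx / (x_R - x)`.
-/

open MeasureTheory
open scoped Classical

/-- The `k`-th smallest value (0-indexed) among `ω 0, …, ω (n-1)`. -/
noncomputable def orderStat (n : ℕ) (k : ℕ) (ω : Fin n → ℝ) : ℝ :=
  ((List.ofFn ω).insertionSort (· ≤ ·)).getD k 0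

open Finset
open scoped ENNReal

section OrderStatistics

variable {n k : ℕ}

theorem orderStat_eq_apply_sort (hk : k < n) (ω : Fin n → ℝ) :
    orderStat n k ω = ω (Tuple.sort ω ⟨k, hk⟩) := by
  have hsort : (List.ofFn ω).insertionSort (· ≤ ·) = List.ofFn (ω ∘ Tuple.sort ω) :=
    (((List.ofFn ω).perm_insertionSort _).trans ((Tuple.sort ω).ofFn_comp_perm ω).symm
      ).eq_of_pairwise' (List.pairwise_insertionSort _ _)
      (Tuple.monotone_sort ω).sortedLE_ofFn.pairwise
  simp [orderStat, hsort, hk]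

theorem orderStat_lt_iff (hk : k < n) (ω : Fin n → ℝ) (a : ℝ) :
    orderStat n k ω < a ↔ k < #{i | ω i < a} := by
  rw [orderStat_eq_apply_sort hk,
    ← card_equiv (Tuple.sort ω) (s := {i | ω (Tuple.sort ω i) < a}) (by simp)]
  exact (Tuple.lt_card_lt_iff_apply_lt_of_monotone (Tuple.monotone_sort ω)).symm

end OrderStatistics

section Measure

variable {α : Type*} [MeasurableSpace α]

theorem mul_measure_le_withDensity_apply (μ : Measure α) {g : α → ℝ≥0∞} {s : Set α}
    {c : ℝ≥0∞} (hs : MeasurableSet s) (hc : ∀ x ∈ s, c ≤ g x) :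
    c * μ s ≤ μ.withDensity g s := by
  rw [withDensity_apply _ hs, ← setLIntegral_const]
  exact setLIntegral_mono' hs hc

theorem MeasureTheory.Measure.pi_univ_pi_ite {ι : Type*} [Fintype ι] [DecidableEq ι] (μ : Measure α)
    [SigmaFinite μ] (T : Finset ι) (A B : Set α) :
    Measure.pi (fun _ : ι => μ) (Set.univ.pi fun i => if i ∈ T then A else B) =
      μ A ^ #T * μ B ^ #Tᶜ := by
  rw [Measure.pi_pi, prod_apply_ite, filter_mem_eq_inter, ← sdiff_eq_filter, univ_inter,
    ← compl_eq_univ_sdiff, prod_const, prod_const]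

theorem setLIntegral_eq_top_of_pairwise_disjoint {ι : Type*} [Countable ι] [Infinite ι]
    {μ : Measure α} {g : α → ℝ≥0∞} {E : Set α} {S : ι → Set α} {c : ℝ≥0∞}
    (hS : ∀ k, MeasurableSet (S k)) (hdisj : Pairwise (Function.onFun Disjoint S))
    (hSE : ∀ k, S k ⊆ E) (hc : c ≠ 0) (hle : ∀ k, c ≤ ∫⁻ x in S k, g x ∂μ) :
    ∫⁻ x in E, g x ∂μ = ∞ :=
  top_le_iff.mp <| calc
    ∞ = ∑' _ : ι, c := (ENNReal.tsum_const_eq_top_of_ne_zero hc).symm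
    _ ≤ ∑' k, ∫⁻ x in S k, g x ∂μ := ENNReal.tsum_le_tsum hle
    _ = ∫⁻ x in ⋃ k, S k, g x ∂μ := (lintegral_iUnion hS hdisj _).symm
    _ ≤ ∫⁻ x in E, g x ∂μ := lintegral_mono_set (Set.iUnion_subset hSE)

theorem ofReal_mul_le_withDensity_Ico {f : ℝ → ℝ} {xL xR δ a b : ℝ}
    (hf : ∀ x ∈ Set.Ico xL xR, δ ≤ f x) (ha : xL ≤ a) (hb : b ≤ xR) :
    ENNReal.ofReal δ * ENNReal.ofReal (b - a) ≤
      volume.withDensity (fun x => ENNReal.ofReal (f x)) (Set.Ico a b) := by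
  rw [← Real.volume_Ico]
  exact mul_measure_le_withDensity_apply volume measurableSet_Ico fun x hx =>
    ENNReal.ofReal_le_ofReal (hf x ⟨ha.trans hx.1, hx.2.trans_le hb⟩)

end Measure

section ShellBox

variable {n : ℕ} (T : Finset (Fin n)) (xL xR h : ℝ)

def shellBox (ε : ℝ) : Set (Fin n → ℝ) :=
  Set.univ.pi fun i => if i ∈ T then Set.Ico (xR - ε) (xR - ε / 2) else Set.Ico xL (xR - h)

variable {T xL xR h} {ε : ℝ} {ω : Fin n → ℝ}

theorem measurableSet_shellBox : MeasurableSet (shellBox T xL xR h ε) :=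
  MeasurableSet.univ_pi fun i => by split_ifs <;> exact measurableSet_Ico

theorem mem_shellBox : ω ∈ shellBox T xL xR h ε ↔
    ∀ i, ω i ∈ if i ∈ T then Set.Ico (xR - ε) (xR - ε / 2) else Set.Ico xL (xR - h) :=
  Set.mem_univ_pi

theorem filter_mem_Ico_eq_of_mem_shellBox (hε : 0 ≤ ε) (hεh : ε ≤ h)
    (hω : ω ∈ shellBox T xL xR h ε) :
    (univ.filter fun i => ω i ∈ Set.Ico (xR - h) xR) = T := by
  ext i
  have hωi := mem_shellBox.mp hω i
  split_ifs at hωi with hi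
  · simp only [mem_filter, mem_univ, true_and, Set.mem_Ico, hi, iff_true]
    constructor <;> linarith [hωi.1, hωi.2]
  · simp only [mem_filter, mem_univ, true_and, Set.mem_Ico, hi, iff_false, not_and, not_lt]
    intro _
    linarith [hωi.2]

theorem orderStat_mem_Ico_of_mem_shellBox (hT : #T = 2) (hε : 0 ≤ ε) (hεh : ε ≤ h)
    (hω : ω ∈ shellBox T xL xR h ε) : orderStat n (n - 2) ω ∈ Set.Ico (xR - ε) xR := by
  have hn : 2 ≤ n := hT ▸ card_le_univ T |>.trans_eq (Fintype.card_fin n)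
  have hlt : ∀ i, ω i < xR := fun i => by
    have hωi := mem_shellBox.mp hω i
    split_ifs at hωi <;> linarith [hωi.2]
  refine ⟨not_lt.mp fun hq => ?_, ?_⟩
  · rw [orderStat_lt_iff (by omega)] at hq
    have hsub : (univ.filter fun i => ω i < xR - ε) ⊆ Tᶜ := fun i hi =>
      mem_compl.mpr fun hiT => by
        have hωi := mem_shellBox.mp hω i
        rw [if_pos hiT] at hωi
        exact (mem_filter.mp hi).2.not_ge hωi.1
    have hcard := card_le_card hsub
    rw [card_compl, Fintype.card_fin, hT] at hcard
    omega
  · rw [orderStat_lt_iff (by omega), filter_true_of_mem fun i _ => hlt i, card_univ,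
      Fintype.card_fin]
    omega

theorem pairwise_disjoint_shellBox (hT : T.Nonempty) (hh : 0 ≤ h) :
    Pairwise (Function.onFun Disjoint fun k : ℕ => shellBox T xL xR h (h / 2 ^ k)) := by
  obtain ⟨i, hi⟩ := hT
  have hmono : Monotone fun k : ℕ => xR - h / 2 ^ k := fun k l hkl =>
    sub_le_sub_left (div_le_div_of_nonneg_left hh (by positivity)
      (pow_le_pow_right₀ one_le_two hkl)) _
  intro k l hkl
  refine Set.disjoint_univ_pi.mpr ⟨i, ?_⟩
  simpa [hi, div_div, pow_succ] using hmono.pairwise_disjoint_on_Ico_succ hkl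

variable {δ : ℝ} {ν : Measure ℝ} [SigmaFinite ν]

theorem le_setLIntegral_shellBox (hT : #T = 2) (hδ : 0 ≤ δ)
    (hν : ∀ a b, xL ≤ a → b ≤ xR →
      ENNReal.ofReal δ * ENNReal.ofReal (b - a) ≤ ν (Set.Ico a b))
    (hε : 0 < ε) (hεh : ε ≤ h) (hhx : h < xR - xL) :
    ENNReal.ofReal (δ ^ 2 / 4) * ν (Set.Ico xL (xR - h)) ^ (n - 2) ≤
      ∫⁻ ω in shellBox T xL xR h ε, ENNReal.ofReal (((xR - orderStat n (n - 2) ω) ^ 2)⁻¹)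
        ∂Measure.pi fun _ => ν := by
  have hshell :
      ENNReal.ofReal δ * ENNReal.ofReal (ε / 2) ≤ ν (Set.Ico (xR - ε) (xR - ε / 2)) := by
    have := hν (xR - ε) (xR - ε / 2) (by linarith) (by linarith)
    rwa [show xR - ε / 2 - (xR - ε) = ε / 2 by ring] at this
  have hconst : ENNReal.ofReal (δ ^ 2 / 4) =
      ENNReal.ofReal (ε ^ 2)⁻¹ * (ENNReal.ofReal δ * ENNReal.ofReal (ε / 2)) ^ 2 := by
    rw [← ENNReal.ofReal_mul hδ, ← ENNReal.ofReal_pow (by positivity),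
      ← ENNReal.ofReal_mul (by positivity)]
    congr 1
    field_simp
    ring
  calc ENNReal.ofReal (δ ^ 2 / 4) * ν (Set.Ico xL (xR - h)) ^ (n - 2)
      ≤ ENNReal.ofReal (ε ^ 2)⁻¹ *
          (ν (Set.Ico (xR - ε) (xR - ε / 2)) ^ 2 * ν (Set.Ico xL (xR - h)) ^ (n - 2)) := by
        rw [hconst, mul_assoc]
        gcongr
    _ = ENNReal.ofReal (ε ^ 2)⁻¹ * Measure.pi (fun _ => ν) (shellBox T xL xR h ε) := by
        rw [shellBox, Measure.pi_univ_pi_ite, hT, card_compl, Fintype.card_fin, hT]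
    _ = ∫⁻ _ in shellBox T xL xR h ε, ENNReal.ofReal (ε ^ 2)⁻¹ ∂Measure.pi fun _ => ν :=
        (setLIntegral_const _ _).symm
    _ ≤ _ := setLIntegral_mono' measurableSet_shellBox fun ω hω => by
        obtain ⟨hlo, hhi⟩ := orderStat_mem_Ico_of_mem_shellBox hT hε.le hεh hω
        exact ENNReal.ofReal_le_ofReal <| inv_anti₀ (pow_pos (sub_pos.mpr hhi) 2)
          (pow_le_pow_left₀ (sub_pos.mpr hhi).le (by linarith) 2)

end ShellBox

theorem expectation_inv_sq_dist_second_largest_infinite_general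
    (n : ℕ) (hn : 3 ≤ n) (f : ℝ → ℝ) (xL xR δ h : ℝ)
    (hδ : 0 < δ)
    (hf_lb : ∀ x ∈ Set.Ico xL xR, δ ≤ f x)
    (hh : 0 < h) (hhlt : h < xR - xL) :
    ∫⁻ ω in {ω : Fin n → ℝ |
        (Finset.univ.filter fun i => ω i ∈ Set.Ico (xR - h) xR).card = 2},
      ENNReal.ofReal (((xR - orderStat n (n - 2) ω) ^ 2)⁻¹)
      ∂(Measure.pi fun _ : Fin n => volume.withDensity fun x => ENNReal.ofReal (f x)) = ⊤ := by
  set ν := volume.withDensity fun x => ENNReal.ofReal (f x)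
  have : SigmaFinite ν := SigmaFinite.withDensity_of_ne_top' fun _ => ENNReal.ofReal_ne_top
  have hν : ∀ a b, xL ≤ a → b ≤ xR →
      ENNReal.ofReal δ * ENNReal.ofReal (b - a) ≤ ν (Set.Ico a b) :=
    fun _ _ => ofReal_mul_le_withDensity_Ico hf_lb
  have hbulk : ν (Set.Ico xL (xR - h)) ≠ 0 := ne_of_gt <| lt_of_lt_of_le
    (ENNReal.mul_pos (ENNReal.ofReal_pos.mpr hδ).ne' (ENNReal.ofReal_pos.mpr (by linarith)).ne')
    (hν _ _ le_rfl (by linarith))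
  have hscale (k : ℕ) : 0 < h / 2 ^ k ∧ h / 2 ^ k ≤ h :=
    ⟨by positivity, div_le_self hh.le (one_le_pow₀ one_le_two)⟩
  obtain ⟨T, -, hT⟩ := exists_subset_card_eq (s := (univ : Finset (Fin n))) (n := 2)
    (by rw [card_univ, Fintype.card_fin]; omega)
  refine setLIntegral_eq_top_of_pairwise_disjoint (fun _ => measurableSet_shellBox)
    (pairwise_disjoint_shellBox (card_pos.mp (by omega)) hh.le) (fun k ω hω => ?_)
    (mul_ne_zero (ENNReal.ofReal_pos.mpr (by positivity)).ne' (pow_ne_zero _ hbulk))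
    fun k => le_setLIntegral_shellBox hT hδ.le hν (hscale k).1 (hscale k).2 hhlt
  rw [Set.mem_ofPred_eq, filter_mem_Ico_eq_of_mem_shellBox (hscale k).1.le (hscale k).2 hω, hT]

/-- Let `X₁, …, Xₙ` be i.i.d. with density `f` bounded below by `δ > 0` on its
support `[x_L, x_R)`. Then `E[ 1/(x_R - X_{(n-1)})² · 1{exactly two observations lie in
[x_R - h, x_R)} ] = +∞` for any `h ∈ (0, x_R - x_L)`. Here `X_{(n-1)}` is the second largest
order statistic. -/
theorem expectation_inv_sq_dist_second_largest_infinite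
    (n : ℕ) (hn : 3 ≤ n) (f : ℝ → ℝ) (xL xR δ Δ h : ℝ)
    (hδ : 0 < δ) (hΔ : δ ≤ Δ)
    (hf_meas : Measurable f)
    (hf_supp : ∀ x, x ∉ Set.Ico xL xR → f x = 0)
    (hf_lb : ∀ x ∈ Set.Ico xL xR, δ ≤ f x)
    (hf_ub : ∀ x ∈ Set.Ico xL xR, f x ≤ Δ)
    (hf_dens : ∫ x, f x = 1)
    (hh : 0 < h) (hhlt : h < xR - xL) :
    ∫⁻ ω in {ω : Fin n → ℝ |
        (Finset.univ.filter fun i => ω i ∈ Set.Ico (xR - h) xR).card = 2},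
      ENNReal.ofReal (((xR - orderStat n (n - 2) ω) ^ 2)⁻¹)
      ∂(Measure.pi fun _ : Fin n => volume.withDensity fun x => ENNReal.ofReal (f x)) = ⊤ :=
  expectation_inv_sq_dist_second_largest_infinite_general n hn f xL xR δ h hδ hf_lb hh hhlt
end

section
/- Let X_1,…,X_n be i.i.d. with density f supported on [x_L, x_R) with 0 < δ ≤ f ≤ Δ, and let the kernel K be nonnegative with compact support. Then the local linear density estimator of Cattaneo, Jansson, and Ma at the right boundary x_R, f̂(x_R) = e_1'·argmin_β Σᵢ { F̂(Xᵢ) − r_1(Xᵢ − x_R)'β }² K((Xᵢ − x_R)/h), with F̂ the empirical CDF and r_1(u) = (1,u)', does not have a finite second moment: E[f̂(x_R)²] = +∞. -/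
open MeasureTheory Matrix
open scoped Classical

/-- The local linear (p = 1) density estimator of Cattaneo–Jansson–Ma at the point `xR`:
the slope (second coefficient) of the weighted least squares fit of the empirical CDF values
`F̂(Xᵢ)` on `(1, Xᵢ - xR)` with weights `K((Xᵢ - xR)/h)`. -/
noncomputable def lpdSlope (n : ℕ) (K : ℝ → ℝ) (h xR : ℝ) (ω : Fin n → ℝ) : ℝ :=
  let w : Fin n → ℝ := fun i => K ((ω i - xR) / h)
  let Fhat : Fin n → ℝ := fun i =>
    (n : ℝ)⁻¹ * ((Finset.univ.filter fun j => ω j ≤ ω i).card : ℝ)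
  let G : Matrix (Fin 2) (Fin 2) ℝ :=
    Matrix.of fun k l => ∑ i, w i * (ω i - xR) ^ ((k : ℕ) + (l : ℕ))
  let b : Fin 2 → ℝ := fun k => ∑ i, w i * (ω i - xR) ^ (k : ℕ) * Fhat i
  (G⁻¹ *ᵥ b) 1

/-!
On the event that two observations lie in the boundary window `(x_R - h, x_R]` at distance at
most `3ε` while all others lie to the left of it, only those two carry kernel weight, so the
fitted line interpolates them and its slope is `1 / (n (X₍₂₎ - X₍₁₎)) ≥ 1 / (3nε)`. The event
has probability of order `ε²`, so it contributes a constant independent of `ε` to `E[f̂²]`;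
the events for `ε = h / 4 / 2ᵏ` are disjoint, and the second moment is an infinite sum of
such constants.
-/

open Set

theorem weightedFit_two_points_slope {w₀ w₁ u₀ u₁ F₀ F₁ : ℝ} (hw₀ : w₀ ≠ 0) (hw₁ : w₁ ≠ 0)
    (hu : u₀ ≠ u₁) :
    ((Matrix.of fun k l : Fin 2 => w₀ * u₀ ^ ((k : ℕ) + l) + w₁ * u₁ ^ ((k : ℕ) + l))⁻¹ *ᵥ
      fun k : Fin 2 => w₀ * u₀ ^ (k : ℕ) * F₀ + w₁ * u₁ ^ (k : ℕ) * F₁) 1 =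
      (F₁ - F₀) / (u₁ - u₀) := by
  set G := Matrix.of fun k l : Fin 2 => w₀ * u₀ ^ ((k : ℕ) + l) + w₁ * u₁ ^ ((k : ℕ) + l)
  set s := (F₁ - F₀) / (u₁ - u₀)
  -- the line through the two points solves the normal equations
  have interpolates : (fun k : Fin 2 => w₀ * u₀ ^ (k : ℕ) * F₀ + w₁ * u₁ ^ (k : ℕ) * F₁) =
      G *ᵥ ![F₀ - s * u₀, s] := by
    have hF₁ : F₁ = F₀ - s * u₀ + s * u₁ := by
      simp only [s]; field_simp [sub_ne_zero.mpr hu.symm]; ring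
    ext k
    fin_cases k <;> simp [G, mulVec, dotProduct, Fin.sum_univ_two, hF₁] <;> ring
  have hdet : IsUnit G.det := by
    rw [isUnit_iff_ne_zero, det_fin_two]
    have : w₀ * w₁ * (u₀ - u₁) ^ 2 ≠ 0 := by have := sub_ne_zero.mpr hu; positivity
    convert this using 1
    simp [G]; ring
  rw [interpolates, mulVec_mulVec, nonsing_inv_mul G hdet, one_mulVec]
  rfl

theorem lpdSlope_eq_of_two_in_window {n : ℕ} {K : ℝ → ℝ} {h xR : ℝ} (hh : 0 < h)
    (hK_supp : ∀ u, u ∉ Icc (-1 : ℝ) 1 → K u = 0) (hK_pos : ∀ u ∈ Ioc (-1 : ℝ) 0, 0 < K u)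
    {ω : Fin (n + 2) → ℝ} (h₀ : ω 0 ∈ Ioc (xR - h) xR) (h₁ : ω 1 ∈ Ioc (xR - h) xR)
    (h₀₁ : ω 0 < ω 1) (hrest : ∀ k : Fin n, ω k.succ.succ < xR - h) :
    lpdSlope (n + 2) K h xR ω = ((n + 2) * (ω 1 - ω 0))⁻¹ := by
  have weight_pos : ∀ x ∈ Ioc (xR - h) xR, K ((x - xR) / h) ≠ 0 := fun x hx =>
    (hK_pos _ ⟨by rw [lt_div_iff₀ hh]; linarith [hx.1],
      div_nonpos_of_nonpos_of_nonneg (by linarith [hx.2]) hh.le⟩).ne'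
  have weight_zero : ∀ k : Fin n, K ((ω k.succ.succ - xR) / h) = 0 := fun k =>
    hK_supp _ fun hmem => by
      have : (ω k.succ.succ - xR) / h < -1 := by rw [div_lt_iff₀ hh]; linarith [hrest k]
      linarith [hmem.1]
  have below : ∀ k : Fin n, ω k.succ.succ < ω 0 := fun k => by linarith [hrest k, h₀.1]
  have count₀ : (Finset.univ.filter fun j => ω j ≤ ω 0).card = n + 1 := by
    simp [Fin.card_filter_univ_succ, h₀₁.not_ge, fun k => (below k).le]
  have count₁ : (Finset.univ.filter fun j => ω j ≤ ω 1).card = n + 2 := by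
    simp [Fin.card_filter_univ_succ, h₀₁.le, fun k => (below k).le.trans h₀₁.le]
  simp only [lpdSlope, Fin.sum_univ_succ (n := n + 1), Fin.sum_univ_succ (n := n), weight_zero,
    zero_mul, Finset.sum_const_zero, add_zero]
  rw [Fin.succ_zero_eq_one, count₀, count₁, weightedFit_two_points_slope (weight_pos _ h₀) (weight_pos _ h₁) (by linarith)]
  push_cast
  field_simp
  ring

def nearTieBox (n : ℕ) (B : Set ℝ) (c ε : ℝ) : Set (Fin (n + 2) → ℝ) :=
  univ.pi (Fin.cons (Ioo (c - 2 * ε) (c - ε)) (Fin.cons (Ioo c (c + ε)) fun _ => B))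

section nearTieBox

variable {n : ℕ} {B : Set ℝ} {c ε : ℝ}

theorem mem_nearTieBox {ω : Fin (n + 2) → ℝ} :
    ω ∈ nearTieBox n B c ε ↔
      ω 0 ∈ Ioo (c - 2 * ε) (c - ε) ∧ ω 1 ∈ Ioo c (c + ε) ∧ ∀ k : Fin n, ω k.succ.succ ∈ B := by
  simp [nearTieBox, Fin.forall_fin_succ]

theorem measurableSet_nearTieBox (hB : MeasurableSet B) : MeasurableSet (nearTieBox n B c ε) :=
  .univ_pi <| Fin.cases measurableSet_Ioo <| Fin.cases measurableSet_Ioo fun _ => hB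

theorem measure_nearTieBox (μ : Measure ℝ) [SigmaFinite μ] :
    Measure.pi (fun _ => μ) (nearTieBox n B c ε) =
      μ (Ioo (c - 2 * ε) (c - ε)) * (μ (Ioo c (c + ε)) * μ B ^ n) := by
  simp [nearTieBox, Measure.pi_pi, Fin.prod_univ_succ]

theorem disjoint_nearTieBox {ε' : ℝ} (hε' : 2 * ε' ≤ ε) :
    Disjoint (nearTieBox n B c ε) (nearTieBox n B c ε') := by
  refine disjoint_univ_pi.2 ⟨0, ?_⟩
  simp only [Fin.cons_zero]
  exact disjoint_left.2 fun x hx hx' => by linarith [hx.2, hx'.1]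

end nearTieBox

theorem withDensity_ofReal_apply_ge {α : Type*} [MeasurableSpace α] {μ : Measure α} {f : α → ℝ}
    {s : Set α} {δ : ℝ} (hs : MeasurableSet s) (hf : ∀ x ∈ s, δ ≤ f x) :
    ENNReal.ofReal δ * μ s ≤ μ.withDensity (fun x => ENNReal.ofReal (f x)) s := by
  rw [withDensity_apply _ hs, ← setLIntegral_const]
  exact setLIntegral_mono' hs fun x hx => ENNReal.ofReal_le_ofReal (hf x hx)

theorem lintegral_eq_top_of_pairwise_disjoint {α ι : Type*} [MeasurableSpace α] [Countable ι]
    [Infinite ι] {μ : Measure α} {g : α → ENNReal} {S : ι → Set α}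
    (hS : ∀ k, MeasurableSet (S k)) (hdisj : Pairwise (Function.onFun Disjoint S)) {C : ENNReal}
    (hC : C ≠ 0) (hg : ∀ k, C ≤ ∫⁻ x in S k, g x ∂μ) : ∫⁻ x, g x ∂μ = ⊤ :=
  top_unique <| calc
    ⊤ = ∑' _ : ι, C := (ENNReal.tsum_const_eq_top_of_ne_zero hC).symm
    _ ≤ ∑' k, ∫⁻ x in S k, g x ∂μ := ENNReal.tsum_le_tsum hg
    _ = ∫⁻ x in ⋃ k, S k, g x ∂μ := (lintegral_iUnion hS hdisj g).symm
    _ ≤ ∫⁻ x, g x ∂μ := setLIntegral_le_lintegral _ _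

theorem inv_le_lpdSlope_of_mem_nearTieBox {n : ℕ} {K : ℝ → ℝ} {h xR ε : ℝ} {B : Set ℝ}
    (hh : 0 < h) (hK_supp : ∀ u, u ∉ Icc (-1 : ℝ) 1 → K u = 0)
    (hK_pos : ∀ u ∈ Ioc (-1 : ℝ) 0, 0 < K u) (hε : 0 < ε) (hεh : 4 * ε ≤ h)
    (hB : ∀ x ∈ B, x < xR - h) {ω : Fin (n + 2) → ℝ} (hω : ω ∈ nearTieBox n B (xR - h / 2) ε) :
    ((n + 2) * (3 * ε))⁻¹ ≤ lpdSlope (n + 2) K h xR ω := by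
  obtain ⟨h₀, h₁, hrest⟩ := mem_nearTieBox.1 hω
  rw [lpdSlope_eq_of_two_in_window hh hK_supp hK_pos ⟨by linarith [h₀.1], by linarith [h₀.2]⟩
    ⟨by linarith [h₁.1], by linarith [h₁.2]⟩ (by linarith [h₀.2, h₁.1]) fun k => hB _ (hrest k)]
  have gap_pos : 0 < ω 1 - ω 0 := by linarith [h₀.2, h₁.1]
  exact inv_anti₀ (mul_pos (by positivity) gap_pos) (by gcongr; linarith [h₀.1, h₁.2])

theorem lintegral_lpdSlope_sq_nearTieBox_ge {n : ℕ} {f K : ℝ → ℝ} {xL xR δ h ε : ℝ}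
    (hδ : 0 < δ) (hf_lb : ∀ x ∈ Ico xL xR, δ ≤ f x)
    (hK_supp : ∀ u, u ∉ Icc (-1 : ℝ) 1 → K u = 0) (hK_pos : ∀ u ∈ Ioc (-1 : ℝ) 0, 0 < K u)
    (hh : 0 < h) (hhlt : h < xR - xL) (hε : 0 < ε) (hεh : 4 * ε ≤ h) :
    ENNReal.ofReal ((δ / (3 * (n + 2))) ^ 2) * ENNReal.ofReal (δ * (xR - h - xL)) ^ n ≤
      ∫⁻ ω in nearTieBox n (Ico xL (xR - h)) (xR - h / 2) ε,
        ENNReal.ofReal (lpdSlope (n + 2) K h xR ω ^ 2)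
        ∂Measure.pi fun _ => volume.withDensity fun x => ENNReal.ofReal (f x) := by
  set μ := volume.withDensity fun x => ENNReal.ofReal (f x)
  set c := xR - h / 2 with hc
  have mass_Ioo : ∀ {a b : ℝ}, Ioo a b ⊆ Ico xL xR → ENNReal.ofReal (δ * (b - a)) ≤ μ (Ioo a b) :=
    fun hab => by
      rw [ENNReal.ofReal_mul hδ.le, ← Real.volume_Ioo]
      exact withDensity_ofReal_apply_ge measurableSet_Ioo fun x hx => hf_lb x (hab hx)
  have mass_left : ENNReal.ofReal (δ * (xR - h - xL)) ≤ μ (Ico xL (xR - h)) := by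
    rw [ENNReal.ofReal_mul hδ.le, ← Real.volume_Ico]
    exact withDensity_ofReal_apply_ge measurableSet_Ico fun x hx =>
      hf_lb x ⟨hx.1, by linarith [hx.2]⟩
  have mass₀ : ENNReal.ofReal (δ * ε) ≤ μ (Ioo (c - 2 * ε) (c - ε)) := by
    have := mass_Ioo (a := c - 2 * ε) (b := c - ε) fun x hx => ⟨by linarith [hx.1], by linarith [hx.2]⟩
    rwa [show c - ε - (c - 2 * ε) = ε by ring] at this
  have mass₁ : ENNReal.ofReal (δ * ε) ≤ μ (Ioo c (c + ε)) := by
    have := mass_Ioo (a := c) (b := c + ε) fun x hx => ⟨by linarith [hx.1], by linarith [hx.2]⟩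
    rwa [add_sub_cancel_left] at this
  calc ENNReal.ofReal ((δ / (3 * (n + 2))) ^ 2) * ENNReal.ofReal (δ * (xR - h - xL)) ^ n
      = ENNReal.ofReal (((n + 2) * (3 * ε))⁻¹ ^ 2) *
          (ENNReal.ofReal (δ * ε) *
            (ENNReal.ofReal (δ * ε) * ENNReal.ofReal (δ * (xR - h - xL)) ^ n)) := by
        rw [← mul_assoc, ← mul_assoc, ← ENNReal.ofReal_mul (by positivity),
          ← ENNReal.ofReal_mul (by positivity)]
        congr 2
        field_simp
    _ ≤ ENNReal.ofReal (((n + 2) * (3 * ε))⁻¹ ^ 2) *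
          Measure.pi (fun _ => μ) (nearTieBox n (Ico xL (xR - h)) c ε) := by
        rw [measure_nearTieBox]
        gcongr
    _ ≤ _ := by
        rw [← setLIntegral_const]
        refine setLIntegral_mono' (measurableSet_nearTieBox measurableSet_Ico) fun ω hω => ?_
        gcongr
        exact inv_le_lpdSlope_of_mem_nearTieBox hh hK_supp hK_pos hε hεh (fun x hx => hx.2) hω

theorem lpd_infinite_second_moment_general
    (n : ℕ) (hn : 3 ≤ n) (f K : ℝ → ℝ) (xL xR δ h : ℝ)
    (hδ : 0 < δ)
    (hf_lb : ∀ x ∈ Set.Ico xL xR, δ ≤ f x)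
    (hK_supp : ∀ u, u ∉ Set.Icc (-1 : ℝ) 1 → K u = 0)
    (hK_pos : ∀ u ∈ Set.Ioc (-1 : ℝ) 0, 0 < K u)
    (hh : 0 < h) (hhlt : h < xR - xL) :
    ∫⁻ ω, ENNReal.ofReal ((lpdSlope n K h xR ω) ^ 2)
      ∂(Measure.pi fun _ : Fin n => volume.withDensity fun x => ENNReal.ofReal (f x)) = ⊤ := by
  obtain ⟨n, rfl⟩ : ∃ m, n = m + 2 := ⟨n - 2, by omega⟩
  have two_mul_le {k l : ℕ} (hkl : k < l) : 2 * (h / 4 / 2 ^ l) ≤ h / 4 / 2 ^ k := by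
    have : (2 : ℝ) ^ (k + 1) ≤ 2 ^ l := pow_le_pow_right₀ one_le_two hkl
    rw [pow_succ] at this
    rw [mul_div_assoc', div_le_div_iff₀ (by positivity) (by positivity)]
    nlinarith [hh.le]
  have four_mul_le (k : ℕ) : 4 * (h / 4 / 2 ^ k) ≤ h := by
    rw [mul_div_assoc', mul_div_cancel₀ _ four_ne_zero]
    exact div_le_self hh.le (one_le_pow₀ one_le_two)
  refine lintegral_eq_top_of_pairwise_disjoint
    (S := fun k : ℕ => nearTieBox n (Ico xL (xR - h)) (xR - h / 2) (h / 4 / 2 ^ k))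
    (fun _ => measurableSet_nearTieBox measurableSet_Ico)
    ((pairwise_disjoint_on _).2 fun _ _ hkl => disjoint_nearTieBox (two_mul_le hkl)) ?_
    fun k => lintegral_lpdSlope_sq_nearTieBox_ge hδ hf_lb hK_supp hK_pos hh hhlt (by positivity)
      (four_mul_le k)
  have : 0 < δ * (xR - h - xL) := mul_pos hδ (by linarith)
  positivity

/-- Let `X₁, …, Xₙ` be i.i.d. with density `f` supported on `[x_L, x_R)` with
`0 < δ ≤ f ≤ Δ`, and let the kernel `K` be nonnegative and compactly supported (vanishing
outside `[-1,1]`, positive on `(-1,0]`). Then the local linear density estimator at the right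
boundary `x_R` does not have a finite second moment: `E[f̂(x_R)²] = +∞`. -/
theorem lpd_infinite_second_moment
    (n : ℕ) (hn : 3 ≤ n) (f K : ℝ → ℝ) (xL xR δ Δ h : ℝ)
    (hδ : 0 < δ) (hΔ : δ ≤ Δ)
    (hf_meas : Measurable f)
    (hf_supp : ∀ x, x ∉ Set.Ico xL xR → f x = 0)
    (hf_lb : ∀ x ∈ Set.Ico xL xR, δ ≤ f x)
    (hf_ub : ∀ x ∈ Set.Ico xL xR, f x ≤ Δ)
    (hf_dens : ∫ x, f x = 1)
    (hK_nonneg : ∀ u, 0 ≤ K u)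
    (hK_compact : HasCompactSupport K)
    (hK_supp : ∀ u, u ∉ Set.Icc (-1 : ℝ) 1 → K u = 0)
    (hK_pos : ∀ u ∈ Set.Ioc (-1 : ℝ) 0, 0 < K u)
    (hh : 0 < h) (hhlt : h < xR - xL) :
    ∫⁻ ω, ENNReal.ofReal ((lpdSlope n K h xR ω) ^ 2)
      ∂(Measure.pi fun _ : Fin n => volume.withDensity fun x => ENNReal.ofReal (f x)) = ⊤ :=
  lpd_infinite_second_moment_general n hn f K xL xR δ h hδ hf_lb hK_supp hK_pos hh hhlt
end

section
/- Let X_1,…,X_n, n ≥ 7, be i.i.d. with density f on [−L, 0) satisfying 0 < δ ≤ f ≤ Δ. Then E[ 1/(X_{(n)} − X_{(1)})⁴ ] < ∞, where X_{(1)} and X_{(n)} are the minimum and maximum order statistics. -/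
open MeasureTheory
open scoped Classical

/-!
If the range `R = max - min` of the sample is below `s ≤ 1`, then all `n` points lie in one of
at most `L / s + 1` boxes `[-L + k s, -L + (k + 2) s]ⁿ`, each of measure at most `(2 Δ s)ⁿ`,
so `P(R < s) ≤ (L + 1) (2 Δ)ⁿ sⁿ⁻¹`. By the layer-cake formula
`E[R⁻ᵖ] = ∫₀^∞ P(t < R⁻ᵖ) dt`, and `P(t < R⁻ᵖ) ≤ P(R < t^(-1/p)) = O(t^(-(n-1)/p))` is integrable
at infinity as soon as `p < n - 1`; here `p = 4` and `n - 1 ≥ 6`.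
-/

open Set
open scoped ENNReal NNReal

section OrderStat

variable {n : ℕ} (ω : Fin n → ℝ)

lemma orderStat_eq_getElem {k : ℕ} (hk : k < n) :
    orderStat n k ω = ((List.ofFn ω).insertionSort (· ≤ ·))[k]'(by simpa using hk) :=
  List.getD_eq_getElem _ _ _

lemma orderStat_mono {j k : ℕ} (hjk : j ≤ k) (hk : k < n) :
    orderStat n j ω ≤ orderStat n k ω := by
  rw [orderStat_eq_getElem ω (hjk.trans_lt hk), orderStat_eq_getElem ω hk]
  exact (List.pairwise_insertionSort _ _).rel_get_of_le (a := ⟨j, by simp; omega⟩)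
    (b := ⟨k, by simpa using hk⟩) hjk

lemma orderStat_mem_range {k : ℕ} (hk : k < n) : orderStat n k ω ∈ range ω := by
  rw [orderStat_eq_getElem ω hk, ← List.mem_ofFn']
  exact (List.perm_insertionSort _ _).subset (List.getElem_mem _)

lemma exists_orderStat_eq (i : Fin n) : ∃ k < n, orderStat n k ω = ω i := by
  have hi : ω i ∈ (List.ofFn ω).insertionSort (· ≤ ·) :=
    (List.perm_insertionSort _ _).symm.subset ((List.mem_ofFn' ω _).mpr ⟨i, rfl⟩)
  obtain ⟨k, hk, hki⟩ := List.getElem_of_mem hi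
  refine ⟨k, by simpa using hk, ?_⟩
  rw [orderStat_eq_getElem ω (by simpa using hk), hki]

variable [NeZero n]

theorem orderStat_zero_eq_iInf : orderStat n 0 ω = ⨅ i, ω i := by
  refine le_antisymm (le_ciInf fun i => ?_) ?_
  · obtain ⟨k, hk, hki⟩ := exists_orderStat_eq ω i
    exact hki ▸ orderStat_mono ω k.zero_le hk
  · obtain ⟨i, hi⟩ := orderStat_mem_range ω (Nat.pos_of_neZero n)
    exact hi ▸ ciInf_le (Finite.bddBelow_range ω) i

theorem orderStat_sub_one_eq_iSup : orderStat n (n - 1) ω = ⨆ i, ω i := by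
  refine le_antisymm ?_ (ciSup_le fun i => ?_)
  · obtain ⟨i, hi⟩ := orderStat_mem_range ω (Nat.sub_one_lt (NeZero.ne n))
    exact hi ▸ le_ciSup (Finite.bddAbove_range ω) i
  · obtain ⟨k, hk, hki⟩ := exists_orderStat_eq ω i
    exact hki ▸ orderStat_mono ω (Nat.le_sub_one_of_lt hk) (Nat.sub_one_lt (NeZero.ne n))

end OrderStat

lemma exists_le_floor_div_Icc_subset_Icc {a b s x : ℝ} (hs : 0 < s) (hx : x ∈ Icc a b) :
    ∃ k ≤ ⌊(b - a) / s⌋₊, Icc x (x + s) ⊆ Icc (a + k * s) (a + k * s + 2 * s) := by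
  have hxa : 0 ≤ (x - a) / s := div_nonneg (sub_nonneg.2 hx.1) hs.le
  refine ⟨⌊(x - a) / s⌋₊, Nat.floor_mono (by gcongr; exact hx.2), Icc_subset_Icc ?_ ?_⟩
  · have := Nat.floor_le hxa
    rw [le_div_iff₀ hs] at this
    linarith
  · have := Nat.lt_floor_add_one ((x - a) / s)
    rw [div_lt_iff₀ hs] at this
    linarith

section Window

variable {ι : Type*} [Fintype ι] {μ : Measure ℝ} {C : ℝ≥0}

lemma measure_pi_exists_Icc_window_le [SigmaFinite μ]
    (hμ : ∀ x y, μ (Icc x y) ≤ C * ENNReal.ofReal (y - x)) {a b s : ℝ} (hs : 0 < s) :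
    Measure.pi (fun _ : ι => μ) {ω | ∃ x ∈ Icc a b, ∀ i, ω i ∈ Icc x (x + s)} ≤
      (⌊(b - a) / s⌋₊ + 1) * (C * ENNReal.ofReal (2 * s)) ^ Fintype.card ι := by
  set box : ℕ → Set (ι → ℝ) := fun k => univ.pi fun _ => Icc (a + k * s) (a + k * s + 2 * s)
  have hcover : {ω : ι → ℝ | ∃ x ∈ Icc a b, ∀ i, ω i ∈ Icc x (x + s)} ⊆
      ⋃ k ∈ Finset.range (⌊(b - a) / s⌋₊ + 1), box k := by
    rintro ω ⟨x, hx, hωx⟩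
    obtain ⟨k, hk, hsub⟩ := exists_le_floor_div_Icc_subset_Icc hs hx
    exact mem_biUnion (Finset.mem_range_succ_iff.2 hk) fun i _ => hsub (hωx i)
  have hbox : ∀ k, Measure.pi (fun _ : ι => μ) (box k) ≤
      (C * ENNReal.ofReal (2 * s)) ^ Fintype.card ι := by
    intro k
    rw [Measure.pi_pi, Finset.prod_const, Finset.card_univ]
    gcongr
    simpa using hμ (a + k * s) (a + k * s + 2 * s)
  calc _ ≤ ∑ k ∈ Finset.range (⌊(b - a) / s⌋₊ + 1), Measure.pi (fun _ : ι => μ) (box k) :=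
        (measure_mono hcover).trans (measure_biUnion_finset_le _ _)
    _ ≤ _ := by
        grw [Finset.sum_le_sum fun k _ => hbox k]
        simp

lemma ae_pi_forall_mem_of_measure_compl_eq_zero [SigmaFinite μ] {s : Set ℝ} (hs : μ sᶜ = 0) :
    ∀ᵐ ω ∂Measure.pi (fun _ : ι => μ), ∀ i, ω i ∈ s :=
  ae_all_iff.2 fun i => ae_iff.2 (Measure.pi_eval_preimage_null (μ := fun _ => μ) (i := i) hs)

lemma measure_pi_iSup_sub_iInf_lt_le [SigmaFinite μ] [Nonempty ι] {a b s : ℝ}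
    (hsupp : μ (Icc a b)ᶜ = 0) (hμ : ∀ x y, μ (Icc x y) ≤ C * ENNReal.ofReal (y - x)) (hs : 0 < s) :
    Measure.pi (fun _ : ι => μ) {ω | (⨆ i, ω i) - ⨅ i, ω i < s} ≤
      (⌊(b - a) / s⌋₊ + 1) * (C * ENNReal.ofReal (2 * s)) ^ Fintype.card ι := by
  refine le_trans (measure_mono_ae ?_) (measure_pi_exists_Icc_window_le hμ hs)
  filter_upwards [ae_pi_forall_mem_of_measure_compl_eq_zero hsupp] with ω hω hR
  obtain ⟨j, hj⟩ := exists_eq_ciInf_of_finite (f := ω)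
  refine ⟨⨅ i, ω i, hj ▸ hω j, fun i => ⟨ciInf_le (Finite.bddBelow_range ω) i, ?_⟩⟩
  have := le_ciSup (Finite.bddAbove_range ω) i
  change _ < _ at hR
  linarith

lemma measure_pi_iSup_sub_iInf_lt_le_pow [SigmaFinite μ] [Nonempty ι] {a b s : ℝ} (hab : a ≤ b)
    (hsupp : μ (Icc a b)ᶜ = 0) (hμ : ∀ x y, μ (Icc x y) ≤ C * ENNReal.ofReal (y - x))
    (hs : s ∈ Ioc 0 1) :
    Measure.pi (fun _ : ι => μ) {ω | (⨆ i, ω i) - ⨅ i, ω i < s} ≤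
      ENNReal.ofReal ((b - a + 1) * (2 * C) ^ Fintype.card ι * s ^ (Fintype.card ι - 1)) := by
  set n := Fintype.card ι
  obtain ⟨hs0, hs1⟩ := hs
  have hfloor : (⌊(b - a) / s⌋₊ + 1 : ℝ) ≤ (b - a + 1) / s := by
    rw [add_div]
    gcongr
    · exact Nat.floor_le (div_nonneg (sub_nonneg.2 hab) hs0.le)
    · exact one_le_one_div hs0 hs1
  have hpow : (C * (2 * s)) ^ n = (2 * C) ^ n * s ^ (n - 1) * s := by
    rw [mul_assoc, ← pow_succ, Nat.sub_one_add_one Fintype.card_ne_zero, ← mul_pow]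
    ring
  have hreal : (⌊(b - a) / s⌋₊ + 1 : ℝ) * (C * (2 * s)) ^ n ≤
      (b - a + 1) * (2 * C) ^ n * s ^ (n - 1) :=
    calc (⌊(b - a) / s⌋₊ + 1 : ℝ) * (C * (2 * s)) ^ n
        ≤ (b - a + 1) / s * ((2 * C) ^ n * s ^ (n - 1) * s) := by rw [hpow]; gcongr
      _ = _ := by field_simp
  calc _ ≤ (⌊(b - a) / s⌋₊ + 1) * (C * ENNReal.ofReal (2 * s)) ^ n :=
        measure_pi_iSup_sub_iInf_lt_le hsupp hμ hs0
    _ = ENNReal.ofReal ((⌊(b - a) / s⌋₊ + 1 : ℝ) * (C * (2 * s)) ^ n) := by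
        symm
        rw [ENNReal.ofReal_mul (by positivity), ENNReal.ofReal_pow (by positivity),
          ENNReal.ofReal_mul C.coe_nonneg, ENNReal.ofReal_coe_nnreal]
        norm_cast
    _ ≤ _ := ENNReal.ofReal_le_ofReal hreal

end Window

theorem lintegral_ofReal_inv_pow_lt_top_of_measure_lt_le {Ω : Type*} [MeasurableSpace Ω]
    {ν : Measure Ω} [IsFiniteMeasure ν] {R : Ω → ℝ} (hR : Measurable R) (hR0 : ∀ ω, 0 ≤ R ω)
    {p q : ℕ} (hp : 0 < p) (hpq : p < q) {c : ℝ}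
    (hsmall : ∀ s ∈ Ioc (0 : ℝ) 1, ν {ω | R ω < s} ≤ ENNReal.ofReal (c * s ^ q)) :
    ∫⁻ ω, ENNReal.ofReal ((R ω ^ p)⁻¹) ∂ν < ∞ := by
  have htail : ∀ t ∈ Ioi (1 : ℝ), ν {ω | t < (R ω ^ p)⁻¹} ≤
      ENNReal.ofReal (c * t ^ (-(q / p : ℝ))) := by
    intro t ht
    have ht0 : 0 < t := zero_lt_one.trans ht
    set s := t ^ (-(p : ℝ)⁻¹)
    have hsub : {ω | t < (R ω ^ p)⁻¹} ⊆ {ω | R ω < s} := by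
      intro ω hω
      -- `(0 ^ p)⁻¹ = 0` in Lean, so `0 < t < (R ω ^ p)⁻¹` excludes `R ω = 0`.
      have hRp : 0 < R ω ^ p := by
        by_contra! h
        rw [mem_ofPred_eq, le_antisymm h (pow_nonneg (hR0 ω) p), inv_zero] at hω
        linarith
      have := (lt_inv_comm₀ ht0 hRp).1 hω
      simp only [mem_ofPred_eq, s, Real.rpow_neg ht0.le, ← Real.inv_rpow ht0.le]
      rw [Real.lt_rpow_inv_iff_of_pos (hR0 ω) (inv_nonneg.2 ht0.le) (by exact_mod_cast hp)]
      exact_mod_cast this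
    have hs : s ∈ Ioc 0 1 := ⟨by positivity,
      Real.rpow_le_one_of_one_le_of_nonpos ht.le (by simp)⟩
    calc ν {ω | t < (R ω ^ p)⁻¹} ≤ ENNReal.ofReal (c * s ^ q) :=
          (measure_mono hsub).trans (hsmall s hs)
      _ = ENNReal.ofReal (c * t ^ (-(q / p : ℝ))) := by
        rw [← Real.rpow_natCast, ← Real.rpow_mul ht0.le]
        congr 3
        field_simp
  have hexp : -(q / p : ℝ) < -1 := by
    rw [neg_lt_neg_iff, one_lt_div (by exact_mod_cast hp)]
    exact_mod_cast hpq
  rw [lintegral_eq_lintegral_meas_lt ν (.of_forall fun ω => by have := hR0 ω; positivity)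
      (by fun_prop), ← Ioc_union_Ioi_eq_Ioi zero_le_one,
    lintegral_union measurableSet_Ioi (Ioc_disjoint_Ioi le_rfl)]
  refine ENNReal.add_lt_top.2 ⟨?_, ?_⟩
  · calc ∫⁻ t in Ioc (0 : ℝ) 1, ν {ω | t < (R ω ^ p)⁻¹} ≤ ∫⁻ _ in Ioc (0 : ℝ) 1, ν univ :=
          lintegral_mono fun _ => measure_mono (subset_univ _)
      _ < ∞ := by simp [measure_lt_top]
  · calc ∫⁻ t in Ioi (1 : ℝ), ν {ω | t < (R ω ^ p)⁻¹}
        ≤ ∫⁻ t in Ioi (1 : ℝ), ENNReal.ofReal (c * t ^ (-(q / p : ℝ))) :=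
          setLIntegral_mono' measurableSet_Ioi htail
      _ < ∞ := ((integrableOn_Ioi_rpow_of_lt hexp one_pos).const_mul c).lintegral_lt_top

lemma withDensity_Icc_le {g : ℝ → ℝ≥0∞} {C : ℝ≥0} (hg : ∀ x, g x ≤ C) (x y : ℝ) :
    volume.withDensity g (Icc x y) ≤ C * ENNReal.ofReal (y - x) := by
  rw [withDensity_apply' _ _, ← Real.volume_Icc, ← setLIntegral_const]
  exact lintegral_mono hg

lemma withDensity_compl_eq_zero {α : Type*} [MeasurableSpace α] {μ : Measure α} [SFinite μ]
    {g : α → ℝ≥0∞} {s : Set α} (hg : ∀ x ∉ s, g x = 0) : μ.withDensity g sᶜ = 0 := by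
  rw [withDensity_apply' _ _]
  exact nonpos_iff_eq_zero.1 <|
    (setLIntegral_mono measurable_const fun x hx => (hg x hx).le).trans_eq lintegral_zero

theorem range_inv_fourth_moment_finite_general
    (n : ℕ) (hn : 7 ≤ n) (f : ℝ → ℝ) (L Δ : ℝ)
    (hL : 0 < L)
    (hf_supp : ∀ x, x ∉ Set.Ico (-L) (0 : ℝ) → f x = 0)
    (hf_ub : ∀ x ∈ Set.Ico (-L) (0 : ℝ), f x ≤ Δ) :
    ∫⁻ ω, ENNReal.ofReal (((orderStat n (n - 1) ω - orderStat n 0 ω) ^ 4)⁻¹)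
      ∂(Measure.pi fun _ : Fin n => volume.withDensity fun x => ENNReal.ofReal (f x)) < ⊤ := by
  have : NeZero n := ⟨by omega⟩
  set μ : Measure ℝ := volume.withDensity fun x => ENNReal.ofReal (f x)
  have hμ_Icc : ∀ x y, μ (Icc x y) ≤ Δ.toNNReal * ENNReal.ofReal (y - x) := by
    refine withDensity_Icc_le fun x => ?_
    by_cases hx : x ∈ Ico (-L) 0
    · exact ENNReal.ofReal_le_ofReal (hf_ub x hx)
    · simp [hf_supp x hx]
  have hμ_supp : μ (Icc (-L) 0)ᶜ = 0 :=
    measure_mono_null (compl_subset_compl.2 Ico_subset_Icc_self)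
      (withDensity_compl_eq_zero fun x hx => by simp [hf_supp x hx])
  have : IsFiniteMeasure μ := by
    refine ⟨(measure_univ_le_add_compl (Icc (-L) 0)).trans_lt ?_⟩
    rw [hμ_supp, add_zero]
    exact (hμ_Icc (-L) 0).trans_lt (ENNReal.mul_lt_top ENNReal.coe_lt_top ENNReal.ofReal_lt_top)
  simp_rw [orderStat_sub_one_eq_iSup, orderStat_zero_eq_iInf]
  exact lintegral_ofReal_inv_pow_lt_top_of_measure_lt_le (by fun_prop)
    (fun ω => sub_nonneg.2 (ciInf_le_ciSup (Finite.bddBelow_range ω) (Finite.bddAbove_range ω)))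
    (q := Fintype.card (Fin n) - 1) (by norm_num) (by rw [Fintype.card_fin]; omega)
    fun s hs => measure_pi_iSup_sub_iInf_lt_le_pow (by linarith) hμ_supp hμ_Icc hs

/-- Let `X₁, …, Xₙ`, `n ≥ 7`, be i.i.d. with density `f` on `[-L, 0)` satisfying
`0 < δ ≤ f ≤ Δ`. Then `E[ 1/(X_{(n)} - X_{(1)})⁴ ] < ∞`, where `X_{(1)}` and `X_{(n)}` are the
minimum and maximum order statistics. -/
theorem range_inv_fourth_moment_finite
    (n : ℕ) (hn : 7 ≤ n) (f : ℝ → ℝ) (L δ Δ : ℝ)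
    (hL : 0 < L) (hδ : 0 < δ) (hΔ : δ ≤ Δ)
    (hf_meas : Measurable f)
    (hf_supp : ∀ x, x ∉ Set.Ico (-L) (0 : ℝ) → f x = 0)
    (hf_lb : ∀ x ∈ Set.Ico (-L) (0 : ℝ), δ ≤ f x)
    (hf_ub : ∀ x ∈ Set.Ico (-L) (0 : ℝ), f x ≤ Δ)
    (hf_dens : ∫ x, f x = 1) :
    ∫⁻ ω, ENNReal.ofReal (((orderStat n (n - 1) ω - orderStat n 0 ω) ^ 4)⁻¹)
      ∂(Measure.pi fun _ : Fin n => volume.withDensity fun x => ENNReal.ofReal (f x)) < ⊤ :=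
  range_inv_fourth_moment_finite_general n hn f L Δ hL hf_supp hf_ub
end

section
/- Let X_1,…,X_n be i.i.d. with density f bounded above by Δ on [−L, 0), n ≥ 7, and suppose the kernel K is everywhere positive, symmetric about zero, and monotonically decreasing in |u|. Then the local linear density estimator f̂(0) = e_1'(X'WX)^{-1}X'WF (with W = diag(K(Xᵢ/h)), F the empirical CDF vector, design rows (1, Xᵢ)) has a finite second moment: E[f̂(0)²] < ∞. -/
open MeasureTheory Matrix
open scoped Classical

/-!
Write `f̂(0)` in closed form as the weighted least-squares slope `N / D`. Lagrange's identity
gives `D = ½ ∑ᵢ ∑ⱼ wᵢ wⱼ (Xᵢ - Xⱼ)² ≥ ½ K(L/h)² R²`, where `R` is the range of the sample, while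
`|N| ≤ n² K(0)² R`; hence `f̂(0)² ≤ C R⁻²`. With `m = n - 1`, `R ≥ |Xⱼ - X₀|` for every `j` gives
`R⁻² ≤ ∏ⱼ |Xⱼ - X₀|^(-2/m)`. Conditionally on `X₀` the factors are independent, and each has
expectation at most `Δ ∫_{|t| < L} |t|^(-2/m) dt`, which is finite because `2/m < 1`.
-/

open scoped ENNReal

-- Also valid for singular `A`: then `A⁻¹ = 0` and `x / 0 = 0`, so both sides vanish.
theorem Matrix.inv_mulVec_apply_one_fin_two {R : Type*} [Field R] (A : Matrix (Fin 2) (Fin 2) R)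
    (b : Fin 2 → R) : (A⁻¹ *ᵥ b) 1 = (A 0 0 * b 1 - A 1 0 * b 0) / A.det := by
  rw [inv_def, adjugate_fin_two, smul_mulVec, Ring.inverse_eq_inv']
  simp [dotProduct, Fin.sum_univ_two]
  ring

section WeightedLeastSquares

variable {ι : Type*} [Fintype ι]

noncomputable def wlsSlope (w x F : ι → ℝ) : ℝ :=
  ((∑ i, w i) * (∑ i, w i * x i * F i) - (∑ i, w i * x i) * (∑ i, w i * F i)) /
    ((∑ i, w i) * (∑ i, w i * x i ^ 2) - (∑ i, w i * x i) ^ 2)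

theorem sum_mul_sum_sq_sub_sq (w x : ι → ℝ) :
    (∑ i, w i) * (∑ i, w i * x i ^ 2) - (∑ i, w i * x i) ^ 2
      = (∑ i, ∑ j, w i * w j * (x i - x j) ^ 2) / 2 := by
  have h : ∀ i, ∑ j, w i * w j * (x i - x j) ^ 2
      = w i * x i ^ 2 * ∑ j, w j + w i * ∑ j, w j * x j ^ 2
        - 2 * (w i * x i * ∑ j, w j * x j) := by
    intro i
    simp only [Finset.mul_sum, ← Finset.sum_add_distrib, ← Finset.sum_sub_distrib]
    exact Finset.sum_congr rfl fun j _ => by ring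
  simp only [h, Finset.sum_sub_distrib, Finset.sum_add_distrib, ← Finset.sum_mul, ← Finset.mul_sum]
  ring

theorem sum_mul_sum_mul_sub_mul (w x F : ι → ℝ) :
    (∑ i, w i) * (∑ i, w i * x i * F i) - (∑ i, w i * x i) * (∑ i, w i * F i)
      = ∑ i, ∑ j, w i * w j * (x j - x i) * F j := by
  have h : ∀ i, ∑ j, w i * w j * (x j - x i) * F j
      = w i * ∑ j, w j * x j * F j - w i * x i * ∑ j, w j * F j := by
    intro i
    simp only [Finset.mul_sum, ← Finset.sum_sub_distrib]
    exact Finset.sum_congr rfl fun j _ => by ring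
  simp only [h, Finset.sum_sub_distrib, ← Finset.sum_mul]

theorem mul_sq_div_two_le_sum_mul_sum_sq_sub_sq {w : ι → ℝ} {c : ℝ} (hc : 0 ≤ c)
    (hw : ∀ i, c ≤ w i) (x : ι → ℝ) (a b : ι) :
    c ^ 2 * (x a - x b) ^ 2 / 2 ≤ (∑ i, w i) * (∑ i, w i * x i ^ 2) - (∑ i, w i * x i) ^ 2 := by
  have hterm : ∀ i j, 0 ≤ w i * w j * (x i - x j) ^ 2 := fun i j =>
    mul_nonneg (mul_nonneg (hc.trans (hw i)) (hc.trans (hw j))) (sq_nonneg _)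
  calc c ^ 2 * (x a - x b) ^ 2 / 2 ≤ w a * w b * (x a - x b) ^ 2 / 2 := by
        gcongr
        rw [sq]
        exact mul_le_mul (hw a) (hw b) hc (hc.trans (hw a))
    _ ≤ (∑ i, ∑ j, w i * w j * (x i - x j) ^ 2) / 2 := by
        gcongr
        exact (Finset.single_le_sum (fun j _ => hterm a j) (Finset.mem_univ b)).trans
          (Finset.single_le_sum (f := fun i => ∑ j, w i * w j * (x i - x j) ^ 2)
            (fun i _ => Finset.sum_nonneg fun j _ => hterm i j) (Finset.mem_univ a))
    _ = _ := (sum_mul_sum_sq_sub_sq w x).symm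

theorem abs_sum_mul_sum_mul_sub_mul_le {w F : ι → ℝ} {C : ℝ} (hw₀ : ∀ i, 0 ≤ w i)
    (hwC : ∀ i, w i ≤ C) (hF₀ : ∀ i, 0 ≤ F i) (hF₁ : ∀ i, F i ≤ 1) {x : ι → ℝ} {d : ℝ}
    (hx : ∀ i j, |x i - x j| ≤ d) :
    |(∑ i, w i) * (∑ i, w i * x i * F i) - (∑ i, w i * x i) * (∑ i, w i * F i)|
      ≤ Fintype.card ι ^ 2 * C ^ 2 * d := by
  have hterm : ∀ i j, |w i * w j * (x j - x i) * F j| ≤ C ^ 2 * d := by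
    intro i j
    rw [abs_mul, abs_mul, abs_mul, abs_of_nonneg (hw₀ i), abs_of_nonneg (hw₀ j),
      abs_of_nonneg (hF₀ j), sq]
    have hC : 0 ≤ C := (hw₀ i).trans (hwC i)
    have hd : 0 ≤ d := (abs_nonneg _).trans (hx i j)
    calc w i * w j * |x j - x i| * F j ≤ C * C * d * 1 :=
          mul_le_mul (mul_le_mul (mul_le_mul (hwC i) (hwC j) (hw₀ j) hC) (hx j i)
            (abs_nonneg _) (mul_nonneg hC hC)) (hF₁ j) (hF₀ j) (by positivity)
      _ = C * C * d := mul_one _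
  rw [sum_mul_sum_mul_sub_mul]
  calc |∑ i, ∑ j, w i * w j * (x j - x i) * F j|
      ≤ ∑ i, ∑ j, |w i * w j * (x j - x i) * F j| :=
        (Finset.abs_sum_le_sum_abs _ _).trans
          (Finset.sum_le_sum fun i _ => Finset.abs_sum_le_sum_abs _ _)
    _ ≤ ∑ _i : ι, ∑ _j : ι, C ^ 2 * d :=
        Finset.sum_le_sum fun i _ => Finset.sum_le_sum fun j _ => hterm i j
    _ = Fintype.card ι ^ 2 * C ^ 2 * d := by
        simp only [Finset.sum_const, Finset.card_univ, nsmul_eq_mul]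
        ring

theorem abs_wlsSlope_mul_le {w F : ι → ℝ} {c C : ℝ} (hc : 0 < c) (hwc : ∀ i, c ≤ w i)
    (hwC : ∀ i, w i ≤ C) (hF₀ : ∀ i, 0 ≤ F i) (hF₁ : ∀ i, F i ≤ 1) {x : ι → ℝ} {a b : ι}
    (hab : ∀ i j, |x i - x j| ≤ |x a - x b|) :
    |wlsSlope w x F| * |x a - x b| ≤ 2 * Fintype.card ι ^ 2 * C ^ 2 / c ^ 2 := by
  have hC : 0 ≤ C := hc.le.trans ((hwc a).trans (hwC a))
  rcases (abs_nonneg (x a - x b)).eq_or_lt with hd | hd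
  · rw [← hd, mul_zero]
    positivity
  have hdet : c ^ 2 * |x a - x b| ^ 2 / 2 ≤ _ :=
    sq_abs (x a - x b) ▸ mul_sq_div_two_le_sum_mul_sum_sq_sub_sq hc.le hwc x a b
  have hdet_pos : 0 < c ^ 2 * |x a - x b| ^ 2 / 2 := by positivity
  have hcov := abs_sum_mul_sum_mul_sub_mul_le (fun i => hc.le.trans (hwc i)) hwC hF₀ hF₁ hab
  rw [wlsSlope, abs_div, abs_of_pos (hdet_pos.trans_le hdet), div_mul_eq_mul_div,
    div_le_div_iff₀ (hdet_pos.trans_le hdet) (by positivity)]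
  calc _ ≤ Fintype.card ι ^ 2 * C ^ 2 * |x a - x b| * |x a - x b| * c ^ 2 := by gcongr
    _ = 2 * Fintype.card ι ^ 2 * C ^ 2 * (c ^ 2 * |x a - x b| ^ 2 / 2) := by ring
    _ ≤ _ := by gcongr

end WeightedLeastSquares

theorem lpdSlope_eq_wlsSlope (n : ℕ) (K : ℝ → ℝ) (h xR : ℝ) (ω : Fin n → ℝ) :
    lpdSlope n K h xR ω = wlsSlope (fun i => K ((ω i - xR) / h)) (fun i => ω i - xR)
      (fun i => (n : ℝ)⁻¹ * ((Finset.univ.filter fun j => ω j ≤ ω i).card : ℝ)) := by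
  rw [lpdSlope, Matrix.inv_mulVec_apply_one_fin_two, det_fin_two, wlsSlope]
  simp only [of_apply]
  norm_num [sq, mul_assoc]

theorem inv_mul_card_filter_le_one {n : ℕ} (p : Fin n → Prop) [DecidablePred p] :
    (n : ℝ)⁻¹ * (Finset.univ.filter p).card ≤ 1 :=
  inv_mul_le_one_of_le₀ (by exact_mod_cast (Finset.card_filter_le _ _).trans_eq (Finset.card_fin n))
    n.cast_nonneg

theorem Function.Even.apply_abs {α β : Type*} [AddGroup α] [LinearOrder α] {K : α → β}
    (hK : Function.Even K) (u : α) : K |u| = K u := by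
  rcases abs_choice u with h | h <;> rw [h]
  exact hK u

section EvenKernel

variable {α β : Type*} [AddCommGroup α] [LinearOrder α] [IsOrderedAddMonoid α] [Preorder β]
  {K : α → β}

theorem Function.Even.apply_le_of_abs_le (hK : Function.Even K)
    (hK' : AntitoneOn K (Set.Ici 0)) {u r : α} (hu : |u| ≤ r) : K r ≤ K u :=
  hK.apply_abs u ▸ hK' (abs_nonneg u) ((abs_nonneg u).trans hu) hu

theorem Function.Even.apply_le_apply_zero (hK : Function.Even K)
    (hK' : AntitoneOn K (Set.Ici 0)) (u : α) : K u ≤ K 0 :=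
  hK.apply_abs u ▸ hK' le_rfl (abs_nonneg u) (abs_nonneg u)

end EvenKernel

theorem ENNReal.ofReal_sq_le_mul_enorm_rpow_neg_two {s d A : ℝ} (hA : 0 < A)
    (h : |s| * |d| ≤ A) : ENNReal.ofReal (s ^ 2) ≤ ENNReal.ofReal (A ^ 2) * ‖d‖ₑ ^ (-2 : ℝ) := by
  rcases eq_or_ne d 0 with rfl | hd
  · rw [enorm_zero, ENNReal.zero_rpow_of_neg (by norm_num), ENNReal.mul_top (by positivity)]
    exact le_top
  have hd' : 0 < |d| := abs_pos.2 hd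
  rw [Real.enorm_eq_ofReal_abs, ENNReal.ofReal_rpow_of_pos hd',
    ← ENNReal.ofReal_mul (by positivity)]
  refine ENNReal.ofReal_le_ofReal ?_
  rw [Real.rpow_neg hd'.le, Real.rpow_two, ← div_eq_mul_inv, le_div_iff₀ (by positivity),
    ← sq_abs s, ← mul_pow]
  exact pow_le_pow_left₀ (by positivity) h 2

theorem ENNReal.rpow_neg_le_prod_rpow_neg {ι : Type*} [Fintype ι] [Nonempty ι] {r : ι → ℝ≥0∞}
    {d : ℝ≥0∞} (hr : ∀ i, r i ≤ d) {p : ℝ} (hp : 0 ≤ p) :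
    d ^ (-p) ≤ ∏ i, r i ^ (-(p / Fintype.card ι)) := by
  have hcard : (Fintype.card ι : ℝ) ≠ 0 := by positivity
  calc d ^ (-p) = ∏ _i : ι, d ^ (-(p / Fintype.card ι)) := by
        rw [Finset.prod_const, Finset.card_univ, ← ENNReal.rpow_natCast, ← ENNReal.rpow_mul]
        field_simp
    _ ≤ ∏ i, r i ^ (-(p / Fintype.card ι)) := by
        refine Finset.prod_le_prod' fun i _ => ?_
        rw [ENNReal.rpow_neg, ENNReal.rpow_neg]
        exact ENNReal.inv_le_inv.2 (ENNReal.rpow_le_rpow (hr i) (by positivity))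

theorem ofReal_lpdSlope_sq_le {m : ℕ} (hm : 0 < m) {K : ℝ → ℝ} {L h : ℝ} (hh : 0 < h)
    (hK_pos : ∀ u, 0 < K u) (hK_even : Function.Even K) (hK_anti : AntitoneOn K (Set.Ici 0))
    {ω : Fin (m + 1) → ℝ} (hω : ∀ i, ω i ∈ Set.Ico (-L) 0) :
    ENNReal.ofReal (lpdSlope (m + 1) K h 0 ω ^ 2)
      ≤ ENNReal.ofReal ((2 * ((m : ℝ) + 1) ^ 2 * K 0 ^ 2 / K (L / h) ^ 2) ^ 2)
        * ∏ j : Fin m, ‖ω j.succ - ω 0‖ₑ ^ (-(2 / m : ℝ)) := by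
  obtain ⟨⟨a, b⟩, -, hab⟩ := Finset.univ.exists_max_image
    (fun q : Fin (m + 1) × Fin (m + 1) => |ω q.1 - ω q.2|) Finset.univ_nonempty
  have hwc : ∀ i, K (L / h) ≤ K (ω i / h) := fun i => by
    refine hK_even.apply_le_of_abs_le hK_anti ?_
    rw [abs_div, abs_of_pos hh, abs_of_neg (hω i).2]
    exact div_le_div_of_nonneg_right (neg_le.1 (hω i).1) hh.le
  rw [lpdSlope_eq_wlsSlope]
  simp only [sub_zero]
  have hslope := abs_wlsSlope_mul_le (hK_pos _) hwc (fun _ => hK_even.apply_le_apply_zero hK_anti _)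
    (F := fun i => ((m : ℝ) + 1)⁻¹ * ((Finset.univ.filter fun j => ω j ≤ ω i).card : ℝ))
    (fun i => by positivity) (fun i => by exact_mod_cast inv_mul_card_filter_le_one _)
    (fun i j => hab (i, j) (Finset.mem_univ _))
  rw [Fintype.card_fin] at hslope
  push_cast at hslope ⊢
  have : Nonempty (Fin m) := ⟨⟨0, hm⟩⟩
  calc _ ≤ ENNReal.ofReal ((2 * ((m : ℝ) + 1) ^ 2 * K 0 ^ 2 / K (L / h) ^ 2) ^ 2)
        * ‖ω a - ω b‖ₑ ^ (-2 : ℝ) :=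
        ENNReal.ofReal_sq_le_mul_enorm_rpow_neg_two
          (by have := hK_pos 0; have := hK_pos (L / h); positivity) hslope
    _ ≤ _ := by
        gcongr
        simpa using ENNReal.rpow_neg_le_prod_rpow_neg (r := fun j : Fin m => ‖ω j.succ - ω 0‖ₑ)
          (fun j => by
            simp only [Real.enorm_eq_ofReal_abs]
            exact ENNReal.ofReal_le_ofReal (hab (j.succ, 0) (Finset.mem_univ _))) zero_le_two

section PiFinSucc

variable {α : Type*} [MeasurableSpace α] (μ : Measure α) [SigmaFinite μ]

theorem lintegral_pi_fin_succ {m : ℕ} (F : α → (Fin m → α) → ℝ≥0∞)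
    (hF : Measurable (Function.uncurry F)) :
    ∫⁻ ω : Fin (m + 1) → α, F (ω 0) (fun j => ω j.succ) ∂Measure.pi (fun _ => μ)
      = ∫⁻ x, ∫⁻ t, F x t ∂Measure.pi (fun _ => μ) ∂μ := by
  have h := (measurePreserving_piFinSuccAbove (fun _ : Fin (m + 1) => μ) 0).lintegral_comp_emb
    (MeasurableEquiv.measurableEmbedding _) (Function.uncurry F)
  rw [lintegral_prod (Function.uncurry F) hF.aemeasurable] at h
  simp only [MeasurableEquiv.piFinSuccAbove_apply, Fin.insertNthEquiv] at h
  exact h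

theorem lintegral_pi_prod_apply {g : α → ℝ≥0∞} (hg : Measurable g) (m : ℕ) :
    ∫⁻ t : Fin m → α, ∏ j, g (t j) ∂Measure.pi (fun _ => μ) = (∫⁻ y, g y ∂μ) ^ m := by
  induction m with
  | zero => simp
  | succ m ih =>
    simp_rw [Fin.prod_univ_succ]
    rw [lintegral_pi_fin_succ μ (fun x t => g x * ∏ j, g (t j)) (by fun_prop)]
    simp_rw [lintegral_const_mul _ (by fun_prop : Measurable fun t : Fin m → α => ∏ j, g (t j)),
      ih]
    rw [lintegral_mul_const _ hg, pow_succ']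

theorem lintegral_pi_prod_kernel {φ : α → α → ℝ≥0∞} (hφ : Measurable (Function.uncurry φ))
    (m : ℕ) :
    ∫⁻ ω : Fin (m + 1) → α, ∏ j : Fin m, φ (ω 0) (ω j.succ) ∂Measure.pi (fun _ => μ)
      = ∫⁻ x, (∫⁻ y, φ x y ∂μ) ^ m ∂μ := by
  rw [lintegral_pi_fin_succ μ (fun x t => ∏ j, φ x (t j)) (by fun_prop)]
  exact lintegral_congr fun x => lintegral_pi_prod_apply μ hφ.of_uncurry_left m

end PiFinSucc

section BoundedDensity

variable {α : Type*} [MeasurableSpace α] {μ : Measure α} {f : α → ℝ} {S : Set α} {Δ : ℝ}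

theorem lintegral_withDensity_ofReal_le (hS : MeasurableSet S) (hf_supp : ∀ x ∉ S, f x = 0)
    (hf_ub : ∀ x ∈ S, f x ≤ Δ) (hf : Measurable f) (g : α → ℝ≥0∞) :
    ∫⁻ y, g y ∂μ.withDensity (fun x => ENNReal.ofReal (f x))
      ≤ ENNReal.ofReal Δ * ∫⁻ y in S, g y ∂μ := by
  calc ∫⁻ y, g y ∂μ.withDensity (fun x => ENNReal.ofReal (f x))
      ≤ ∫⁻ y, S.indicator (fun y => ENNReal.ofReal Δ * g y) y ∂μ := by
        refine (lintegral_withDensity_le_lintegral_mul μ hf.ennreal_ofReal g).trans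
          (lintegral_mono fun y => ?_)
        by_cases hy : y ∈ S
        · simpa [hy] using mul_le_mul_left (ENNReal.ofReal_le_ofReal (hf_ub y hy)) (g y)
        · simp [hy, hf_supp y hy]
    _ = ENNReal.ofReal Δ * ∫⁻ y in S, g y ∂μ := by
        rw [lintegral_indicator hS, lintegral_const_mul' _ _ ENNReal.ofReal_ne_top]

theorem ae_withDensity_ofReal_mem (hf_supp : ∀ x ∉ S, f x = 0) (hf : Measurable f) :
    ∀ᵐ x ∂μ.withDensity (fun x => ENNReal.ofReal (f x)), x ∈ S := by
  rw [ae_withDensity_iff hf.ennreal_ofReal]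
  exact ae_of_all _ fun x hx => by_contra fun hxS => hx (by simp [hf_supp x hxS])

theorem isFiniteMeasure_withDensity_ofReal (hS : MeasurableSet S) (hμS : μ S ≠ ⊤)
    (hf_supp : ∀ x ∉ S, f x = 0) (hf_ub : ∀ x ∈ S, f x ≤ Δ) (hf : Measurable f) :
    IsFiniteMeasure (μ.withDensity fun x => ENNReal.ofReal (f x)) := by
  refine ⟨calc _ = ∫⁻ _, 1 ∂μ.withDensity fun x => ENNReal.ofReal (f x) := lintegral_one.symm
    _ ≤ ENNReal.ofReal Δ * μ S := by
      simpa using lintegral_withDensity_ofReal_le hS hf_supp hf_ub hf 1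
    _ < ⊤ := ENNReal.mul_lt_top ENNReal.ofReal_lt_top hμS.lt_top⟩

end BoundedDensity

theorem lintegral_ball_enorm_rpow_neg_lt_top {E : Type*} [NormedAddCommGroup E]
    [NormedSpace ℝ E] [FiniteDimensional ℝ E] [Nontrivial E] [MeasurableSpace E] [BorelSpace E]
    (μ : Measure E) [μ.IsAddHaarMeasure] {p : ℝ} (hp : p < Module.finrank ℝ E) (r : ℝ) :
    ∫⁻ x in Metric.ball 0 r, ‖x‖ₑ ^ (-p) ∂μ < ⊤ := by
  have hint : IntegrableOn (fun x : E => ‖x‖ ^ (-p)) (Metric.ball 0 r) μ :=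
    integrableOn_ball_of_norm_le_rpow (C := 1) Module.finrank_pos hp
      (ae_of_all _ fun x => by simp [abs_of_nonneg (Real.rpow_nonneg (norm_nonneg x) _)])
      (measurable_norm.pow_const _).aestronglyMeasurable
  refine lt_of_eq_of_lt (lintegral_congr_ae ?_) hint.2
  filter_upwards [ae_restrict_of_ae (Measure.ae_ne μ 0)] with x hx
  rw [Real.enorm_of_nonneg (Real.rpow_nonneg (norm_nonneg x) _), ← ofReal_norm,
    ENNReal.ofReal_rpow_of_pos (norm_pos_iff.2 hx)]

theorem setLIntegral_comp_sub_right_le {G : Type*} [MeasurableSpace G] [AddGroup G]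
    [MeasurableAdd G] {μ : Measure G} [μ.IsAddRightInvariant] (ψ : G → ℝ≥0∞) {S T : Set G}
    (hS : MeasurableSet S) (hT : MeasurableSet T) {x : G} (hST : ∀ y ∈ S, y - x ∈ T) :
    ∫⁻ y in S, ψ (y - x) ∂μ ≤ ∫⁻ t in T, ψ t ∂μ :=
  calc ∫⁻ y in S, ψ (y - x) ∂μ = ∫⁻ y in S, T.indicator ψ (y - x) ∂μ :=
        setLIntegral_congr_fun hS fun y hy => (Set.indicator_of_mem (hST y hy) ψ).symm
    _ ≤ ∫⁻ y, T.indicator ψ (y - x) ∂μ := setLIntegral_le_lintegral _ _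
    _ = ∫⁻ t in T, ψ t ∂μ := by rw [lintegral_sub_right_eq_self, lintegral_indicator hT]

theorem ae_lintegral_withDensity_enorm_sub_rpow_neg_le {f : ℝ → ℝ} {a b Δ : ℝ}
    (hf_supp : ∀ x ∉ Set.Ico a b, f x = 0) (hf_ub : ∀ x ∈ Set.Ico a b, f x ≤ Δ)
    (hf : Measurable f) (p : ℝ) :
    ∀ᵐ x ∂volume.withDensity (fun x => ENNReal.ofReal (f x)),
      ∫⁻ y, ‖y - x‖ₑ ^ (-p) ∂volume.withDensity (fun x => ENNReal.ofReal (f x))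
        ≤ ENNReal.ofReal Δ * ∫⁻ t in Metric.ball (0 : ℝ) (b - a), ‖t‖ₑ ^ (-p) := by
  filter_upwards [ae_withDensity_ofReal_mem hf_supp hf] with x hx
  refine (lintegral_withDensity_ofReal_le measurableSet_Ico hf_supp hf_ub hf _).trans
    (mul_le_mul_right (setLIntegral_comp_sub_right_le (fun t => ‖t‖ₑ ^ (-p))
      measurableSet_Ico Metric.isOpen_ball.measurableSet fun y hy => ?_) _)
  rw [Real.ball_eq_Ioo]
  constructor <;> linarith [hx.1, hx.2, hy.1, hy.2]

theorem lpd_finite_second_moment_noncompact_kernel_general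
    (n : ℕ) (hn : 7 ≤ n) (f K : ℝ → ℝ) (L Δ h : ℝ)
    (hh : 0 < h)
    (hf_meas : Measurable f)
    (hf_supp : ∀ x, x ∉ Set.Ico (-L) (0 : ℝ) → f x = 0)
    (hf_ub : ∀ x ∈ Set.Ico (-L) (0 : ℝ), f x ≤ Δ)
    (hK_pos : ∀ u, 0 < K u)
    (hK_symm : ∀ u, K (-u) = K u)
    (hK_mono : ∀ u v : ℝ, 0 ≤ u → u ≤ v → K v ≤ K u) :
    ∫⁻ ω, ENNReal.ofReal ((lpdSlope n K h 0 ω) ^ 2)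
      ∂(Measure.pi fun _ : Fin n => volume.withDensity fun x => ENNReal.ofReal (f x)) < ⊤ := by
  obtain ⟨m, rfl⟩ : ∃ m, n = m + 1 := ⟨n - 1, by omega⟩
  set ν := volume.withDensity fun x => ENNReal.ofReal (f x)
  have : IsFiniteMeasure ν :=
    isFiniteMeasure_withDensity_ofReal measurableSet_Ico (by simp) hf_supp hf_ub hf_meas
  set p : ℝ := 2 / m
  have hI := lintegral_ball_enorm_rpow_neg_lt_top volume (p := p) (by
    rw [Module.finrank_self, Nat.cast_one, div_lt_one (Nat.cast_pos.2 (by omega))]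
    norm_cast; omega) (0 - -L)
  set C := ENNReal.ofReal ((2 * ((m : ℝ) + 1) ^ 2 * K 0 ^ 2 / K (L / h) ^ 2) ^ 2)
  calc _ ≤ ∫⁻ ω, C * ∏ j : Fin m, ‖ω j.succ - ω 0‖ₑ ^ (-p) ∂Measure.pi fun _ => ν := by
        refine lintegral_mono_ae ?_
        filter_upwards [ae_all_iff.2 fun i => Measure.tendsto_eval_ae_ae (i := i)
          (ae_withDensity_ofReal_mem hf_supp hf_meas)] with ω hω
        exact ofReal_lpdSlope_sq_le (by omega) hh hK_pos hK_symm
          (fun u hu v _ huv => hK_mono u v hu huv) hω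
    _ = C * ∫⁻ x, (∫⁻ y, ‖y - x‖ₑ ^ (-p) ∂ν) ^ m ∂ν := by
        rw [lintegral_const_mul _ (by fun_prop)]
        exact congrArg _ (lintegral_pi_prod_kernel ν (φ := fun x y => ‖y - x‖ₑ ^ (-p))
          (by fun_prop) m)
    _ ≤ C * ∫⁻ x, (ENNReal.ofReal Δ * ∫⁻ t in Metric.ball (0 : ℝ) (0 - -L), ‖t‖ₑ ^ (-p)) ^ m ∂ν := by
        gcongr 1
        exact lintegral_mono_ae ((ae_lintegral_withDensity_enorm_sub_rpow_neg_le hf_supp hf_ub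
          hf_meas p).mono fun x hx => pow_le_pow_left' hx m)
    _ < ⊤ := by
        rw [lintegral_const]
        finiteness

/-- Theorem 1′: Let `X₁, …, Xₙ`, `n ≥ 7`, be i.i.d. with density `f` on
`[-L, 0)` with `0 < δ ≤ f ≤ Δ`, and let the kernel `K` be everywhere positive, symmetric
about zero and monotonically decreasing in `|u|`. Then the local linear density estimator at
the right boundary `0` has a finite second moment: `E[f̂(0)²] < ∞`. -/
theorem lpd_finite_second_moment_noncompact_kernel
    (n : ℕ) (hn : 7 ≤ n) (f K : ℝ → ℝ) (L δ Δ h : ℝ)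
    (hL : 0 < L) (hδ : 0 < δ) (hΔ : δ ≤ Δ) (hh : 0 < h)
    (hf_meas : Measurable f)
    (hf_supp : ∀ x, x ∉ Set.Ico (-L) (0 : ℝ) → f x = 0)
    (hf_lb : ∀ x ∈ Set.Ico (-L) (0 : ℝ), δ ≤ f x)
    (hf_ub : ∀ x ∈ Set.Ico (-L) (0 : ℝ), f x ≤ Δ)
    (hf_dens : ∫ x, f x = 1)
    (hK_pos : ∀ u, 0 < K u)
    (hK_symm : ∀ u, K (-u) = K u)
    (hK_mono : ∀ u v : ℝ, 0 ≤ u → u ≤ v → K v ≤ K u) :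
    ∫⁻ ω, ENNReal.ofReal ((lpdSlope n K h 0 ω) ^ 2)
      ∂(Measure.pi fun _ : Fin n => volume.withDensity fun x => ENNReal.ofReal (f x)) < ⊤ :=
  lpd_finite_second_moment_noncompact_kernel_general n hn f K L Δ h hh hf_meas hf_supp hf_ub hK_pos
    hK_symm hK_mono
end

section
/- Let X_{(n-2)} < X_{(n-1)} < X_{(n)} be three points with X_{(n-2)} ∈ [x_R−h, x_R−2h/3) and X_{(n-1)}, X_{(n)} ∈ [x_R−h/3, x_R). Then for the quadratic interpolation slope expression S = (2x_R − (X_{(n-1)}+X_{(n-2)}))/(n(X_{(n)}−X_{(n-2)})(X_{(n)}−X_{(n-1)})) − (2x_R − (X_{(n)}+X_{(n-1)}))/(n(X_{(n)}−X_{(n-2)})(X_{(n-1)}−X_{(n-2)})), both summands are positive and the first exceeds the second, and S ≥ (h/3)/(n·h·(x_R − X_{(n-1)})) − 1/(n·h). -/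
private lemma qis_aux1 (N ca u h X : ℝ) (h1 : N ≠ 0) (h2 : ca ≠ 0) (h3 : u ≠ 0) (h4 : h ≠ 0) :
    X/(N*ca*u) - 2*u/(N*ca*(h/3)) = (X/u - 6*u/h)/(N*ca) := by
  field_simp
  ring

private lemma qis_aux2 (N u h : ℝ) (h1 : N ≠ 0) (h3 : u ≠ 0) (h4 : h ≠ 0) :
    (h/3)/(N*h*u) - 1/(N*h) = (h/(3*u)-1)/(N*h) := by
  field_simp


/-- Let `X_{(n-2)} < X_{(n-1)} < X_{(n)}` be three points with
`X_{(n-2)} ∈ [x_R - h, x_R - 2h/3)` and `X_{(n-1)}, X_{(n)} ∈ [x_R - h/3, x_R)`. Writing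
`a = X_{(n-2)}, b = X_{(n-1)}, c = X_{(n)}`, both summands of the quadratic interpolation
slope expression `S` are positive, the first exceeds the second, and
`S ≥ (h/3)/(n·h·(x_R - b)) - 1/(n·h)`. -/
theorem quadratic_interpolation_slope_bounds
    (n : ℕ) (hn : 3 ≤ n) (xR h a b c : ℝ) (hh : 0 < h)
    (hab : a < b) (hbc : b < c)
    (ha : a ∈ Set.Ico (xR - h) (xR - 2 * h / 3))
    (hb : b ∈ Set.Ico (xR - h / 3) xR)
    (hc : c ∈ Set.Ico (xR - h / 3) xR) :
    0 < (2 * xR - (c + b)) / (n * (c - a) * (b - a)) ∧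
    (2 * xR - (c + b)) / (n * (c - a) * (b - a)) <
      (2 * xR - (b + a)) / (n * (c - a) * (c - b)) ∧
    (h / 3) / (n * h * (xR - b)) - 1 / (n * h) ≤
      (2 * xR - (b + a)) / (n * (c - a) * (c - b)) -
        (2 * xR - (c + b)) / (n * (c - a) * (b - a)) := by
  obtain ⟨ha1, ha2⟩ := ha
  obtain ⟨hb1, hb2⟩ := hb
  obtain ⟨hc1, hc2⟩ := hc
  have hN : (3:ℝ) ≤ (n:ℝ) := by exact_mod_cast hn
  have hN0 : (0:ℝ) < (n:ℝ) := by linarith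
  have hca : h/3 < c - a := by linarith
  have hba : h/3 < b - a := by linarith
  have hcb : c - b < h/3 := by linarith
  have hcb0 : 0 < c - b := by linarith
  have hca0 : 0 < c - a := by linarith
  have hba0 : 0 < b - a := by linarith
  have hcah : c - a < h := by linarith
  have hu0 : 0 < xR - b := by linarith
  have hu3 : xR - b ≤ h/3 := by linarith
  have d1 : 0 < (n:ℝ) * (c - a) * (b - a) := by positivity
  have d2 : 0 < (n:ℝ) * (c - a) * (c - b) := by positivity
  have num1 : 0 < 2 * xR - (c + b) := by linarith
  have num2 : 0 < 2 * xR - (b + a) := by linarith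
  refine ⟨div_pos num1 d1, ?_, ?_⟩
  · rw [div_lt_div_iff₀ d1 d2]
    have key : (2 * xR - (c + b)) * (c - b) < (2 * xR - (b + a)) * (b - a) := by
      nlinarith
    nlinarith [mul_lt_mul_of_pos_left key (mul_pos hN0 hca0)]
  · -- part 3
    have hcbu : c - b < xR - b := by linarith
    have step1 : (2 * xR - (b + a)) / ((n:ℝ) * (c - a) * (xR - b)) ≤
        (2 * xR - (b + a)) / ((n:ℝ) * (c - a) * (c - b)) := by
      gcongr
    have step2 : (2 * xR - (c + b)) / ((n:ℝ) * (c - a) * (b - a)) ≤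
        2 * (xR - b) / ((n:ℝ) * (c - a) * (h/3)) := by
      apply div_le_div₀ (by positivity) (by linarith) (by positivity)
      gcongr
    have hne1 : ((n:ℝ)) ≠ 0 := hN0.ne'
    have hne2 : c - a ≠ 0 := hca0.ne'
    have hne3 : xR - b ≠ 0 := hu0.ne'
    have hne4 : h ≠ 0 := hh.ne'
    obtain ⟨q, hq⟩ : ∃ q : ℝ, q = (2 * xR - (b + a)) / (xR - b) - 6 * (xR - b) / h := ⟨_, rfl⟩
    have hq1 : h / (3 * (xR - b)) - 1 ≤ q := by
      rw [hq, div_sub_div _ _ hu0.ne' hh.ne', sub_le_iff_le_add, div_add' _ _ _ (by positivity), div_le_div_iff₀ (by positivity) (by positivity)]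
      have hM : xR - b + 2*h/3 ≤ 2 * xR - (b + a) := by linarith
      have h3u : (0:ℝ) ≤ h - 3*(xR - b) := by linarith
      nlinarith [mul_le_mul_of_nonneg_left (mul_le_mul_of_nonneg_right hM hh.le) hu0.le,
        mul_nonneg (mul_nonneg hu0.le hu0.le) h3u,
        mul_nonneg hu0.le (mul_nonneg hh.le hh.le)]
    have hq0 : 0 ≤ q := by
      have : (0:ℝ) ≤ h / (3 * (xR - b)) - 1 := by
        rw [sub_nonneg, le_div_iff₀ (by positivity)]; linarith
      exact le_trans this hq1
    have eq1 : (2 * xR - (b + a)) / ((n:ℝ) * (c - a) * (xR - b)) -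
        2 * (xR - b) / ((n:ℝ) * (c - a) * (h/3)) = q / ((n:ℝ) * (c - a)) := by
      rw [hq]
      exact qis_aux1 _ _ _ _ _ hne1 hne2 hne3 hne4
    have step3 : q / ((n:ℝ) * h) ≤ q / ((n:ℝ) * (c - a)) := by
      gcongr
    have step4 : (h / (3 * (xR - b)) - 1) / ((n:ℝ) * h) ≤ q / ((n:ℝ) * h) := by
      gcongr
    have eq2 : (h/3) / ((n:ℝ) * h * (xR - b)) - 1 / ((n:ℝ) * h) =
        (h / (3 * (xR - b)) - 1) / ((n:ℝ) * h) :=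
      qis_aux2 _ _ _ hne1 hne3 hne4
    calc (h/3) / ((n:ℝ) * h * (xR - b)) - 1 / ((n:ℝ) * h)
        = (h / (3 * (xR - b)) - 1) / ((n:ℝ) * h) := eq2
      _ ≤ q / ((n:ℝ) * h) := step4
      _ ≤ q / ((n:ℝ) * (c - a)) := step3
      _ = (2 * xR - (b + a)) / ((n:ℝ) * (c - a) * (xR - b)) -
            2 * (xR - b) / ((n:ℝ) * (c - a) * (h/3)) := eq1.symm
      _ ≤ (2 * xR - (b + a)) / ((n:ℝ) * (c - a) * (c - b)) -
            (2 * xR - (c + b)) / ((n:ℝ) * (c - a) * (b - a)) := by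
          exact sub_le_sub step1 step2
end

section
/- Let X_1,…,X_n be i.i.d. with density f on [x_L, x_R), 0 < δ ≤ f ≤ Δ, and let K be nonnegative and compactly supported. Then the local quadratic (p = 2) local polynomial density estimator f̂(x_R) does not have a finite second moment. -/
open MeasureTheory Matrix
open scoped Classical

/-- The local quadratic (p = 2) density estimator of Cattaneo–Jansson–Ma at `xR`: the second
coefficient (first-derivative coefficient) of the weighted least squares fit of the empirical
CDF values `F̂(Xᵢ)` on `(1, Xᵢ - xR, (Xᵢ - xR)²)` with weights `K((Xᵢ - xR)/h)`. -/
noncomputable def lpd2Slope (n : ℕ) (K : ℝ → ℝ) (h xR : ℝ) (ω : Fin n → ℝ) : ℝ :=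
  let w : Fin n → ℝ := fun i => K ((ω i - xR) / h)
  let Fhat : Fin n → ℝ := fun i =>
    (n : ℝ)⁻¹ * ((Finset.univ.filter fun j => ω j ≤ ω i).card : ℝ)
  let G : Matrix (Fin 3) (Fin 3) ℝ :=
    Matrix.of fun k l => ∑ i, w i * (ω i - xR) ^ ((k : ℕ) + (l : ℕ))
  let b : Fin 3 → ℝ := fun k => ∑ i, w i * (ω i - xR) ^ (k : ℕ) * Fhat i
  (G⁻¹ *ᵥ b) 1

/-!
On the event that the first three observations lie in the window `(xR - h, xR)`, in increasing
order, and all the others lie to its left, only three kernel weights are nonzero, so the weighted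
least squares fit is the quadratic interpolant of the three points `(Xⱼ, F̂(Xⱼ))`, whose values
increase in steps of `1/n`. When the first two points are at a distance `a` that is small
compared to the gap to the third, the interpolant bends so sharply that its slope at `xR` is at
most `-1/(n a)`. Boxes forcing `a ≍ 2⁻ᵏ` have probability `≍ 4⁻ᵏ`, so each of infinitely many
disjoint boxes contributes the same positive amount to `E[f̂(xR)²]`.
-/

open Finset Set Function

noncomputable def wlsPolyCoeffs {ι : Type*} [Fintype ι] (d : ℕ) (w x y : ι → ℝ) : Fin d → ℝ :=
  (Matrix.of fun k l : Fin d => ∑ i, w i * x i ^ ((k : ℕ) + (l : ℕ)))⁻¹ *ᵥ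
    fun k => ∑ i, w i * x i ^ (k : ℕ) * y i

lemma lpd2Slope_eq_wlsPolyCoeffs (n : ℕ) (K : ℝ → ℝ) (h xR : ℝ) (ω : Fin n → ℝ) :
    lpd2Slope n K h xR ω = wlsPolyCoeffs 3 (fun i => K ((ω i - xR) / h)) (fun i => ω i - xR)
      (fun i => (n : ℝ)⁻¹ * (#{j | ω j ≤ ω i} : ℝ)) 1 := rfl

lemma wlsPolyCoeffs_castAdd {d k m : ℕ} (w x y : Fin (k + m) → ℝ)
    (hw : ∀ i, w (Fin.natAdd k i) = 0) :
    wlsPolyCoeffs d w x y =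
      wlsPolyCoeffs d (w ∘ Fin.castAdd m) (x ∘ Fin.castAdd m) (y ∘ Fin.castAdd m) := by
  simp [wlsPolyCoeffs, Fin.sum_univ_add, hw]

lemma gram_eq_vandermonde {d : ℕ} (w x : Fin d → ℝ) :
    (Matrix.of fun k l : Fin d => ∑ i, w i * x i ^ ((k : ℕ) + (l : ℕ))) =
      (vandermonde x)ᵀ * diagonal w * vandermonde x := by
  ext k l
  rw [of_apply, mul_apply]
  simp only [mul_diagonal, transpose_apply, vandermonde_apply, pow_add]
  exact Finset.sum_congr rfl fun i _ => by ring

lemma wlsPolyCoeffs_eq_of_interpolates {d : ℕ} {w x y : Fin d → ℝ} (hw : ∀ i, w i ≠ 0)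
    (hx : Injective x) {β : Fin d → ℝ} (hβ : vandermonde x *ᵥ β = y) :
    wlsPolyCoeffs d w x y = β := by
  have hG : IsUnit ((vandermonde x)ᵀ * diagonal w * vandermonde x).det := by
    simp only [det_mul, det_transpose, det_diagonal, isUnit_iff_ne_zero]
    exact mul_ne_zero (mul_ne_zero (det_vandermonde_ne_zero_iff.2 hx)
      (Finset.prod_ne_zero_iff.2 fun i _ => hw i)) (det_vandermonde_ne_zero_iff.2 hx)
  have hb : (fun k : Fin d => ∑ i, w i * x i ^ (k : ℕ) * y i) =
      ((vandermonde x)ᵀ * diagonal w * vandermonde x) *ᵥ β := by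
    rw [← mulVec_mulVec, hβ]
    ext k
    simp only [mulVec, dotProduct, mul_diagonal, transpose_apply, vandermonde_apply]
    exact Finset.sum_congr rfl fun i _ => by ring
  rw [wlsPolyCoeffs, gram_eq_vandermonde, hb, mulVec_mulVec, nonsing_inv_mul _ hG, one_mulVec]

/-- Newton form: the interpolant is `y₀ + d₁ (X - x₀) + d₂ (X - x₀) (X - x₁)`. -/
noncomputable def quadInterpCoeffs (x y : Fin 3 → ℝ) : Fin 3 → ℝ :=
  let d₁ := (y 1 - y 0) / (x 1 - x 0)
  let d₂ := ((y 2 - y 1) / (x 2 - x 1) - d₁) / (x 2 - x 0)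
  ![y 0 - d₁ * x 0 + d₂ * x 0 * x 1, d₁ - d₂ * (x 0 + x 1), d₂]

lemma vandermonde_mulVec_quadInterpCoeffs {x : Fin 3 → ℝ} (hx : Injective x) (y : Fin 3 → ℝ) :
    vandermonde x *ᵥ quadInterpCoeffs x y = y := by
  have h10 : x 1 - x 0 ≠ 0 := sub_ne_zero.2 (hx.ne (by decide))
  have h21 : x 2 - x 1 ≠ 0 := sub_ne_zero.2 (hx.ne (by decide))
  have h20 : x 2 - x 0 ≠ 0 := sub_ne_zero.2 (hx.ne (by decide))
  ext j
  fin_cases j <;>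
    simp [mulVec, dotProduct, Fin.sum_univ_three, quadInterpCoeffs] <;> field_simp <;> ring

lemma quadInterpCoeffs_one_le {x y : Fin 3 → ℝ} {η : ℝ} (hη : 0 ≤ η) (h01 : x 0 < x 1)
    (hgap : 3 * (x 1 - x 0) ≤ x 2 - x 1) (hfar : 4 * (x 2 - x 1) ≤ -(x 0 + x 1))
    (hy₁ : y 1 - y 0 = η) (hy₂ : y 2 - y 1 = η) :
    quadInterpCoeffs x y 1 ≤ -(η / (x 1 - x 0)) := by
  have ha : 0 < x 1 - x 0 := sub_pos.2 h01
  have hb : 0 < x 2 - x 1 := by linarith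
  have hc : 0 < x 2 - x 0 := by linarith
  have hbend : (x 2 - x 1 - (x 1 - x 0)) * (x 0 + x 1) / ((x 2 - x 1) * (x 2 - x 0)) ≤ -2 := by
    rw [div_le_iff₀ (by positivity)]
    nlinarith
  calc quadInterpCoeffs x y 1
      = η / (x 1 - x 0) *
          (1 + (x 2 - x 1 - (x 1 - x 0)) * (x 0 + x 1) / ((x 2 - x 1) * (x 2 - x 0))) := by
        simp only [quadInterpCoeffs, Matrix.cons_val_one, Matrix.cons_val_zero, hy₁, hy₂]
        field_simp
        ring
    _ ≤ η / (x 1 - x 0) * (-1) := by gcongr; linarith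
    _ = -(η / (x 1 - x 0)) := by ring

lemma card_filter_le_castAdd {k m : ℕ} (ω : Fin (k + m) → ℝ)
    (hmono : StrictMono (ω ∘ Fin.castAdd m))
    (hrest : ∀ i j, ω (Fin.natAdd k i) < ω (Fin.castAdd m j)) (j : Fin k) :
    #{i | ω i ≤ ω (Fin.castAdd m j)} = m + j + 1 := by
  have hle : ∀ j', ω (Fin.castAdd m j') ≤ ω (Fin.castAdd m j) ↔ j' ≤ j :=
    fun _ => hmono.le_iff_le
  rw [card_filter, Fin.sum_univ_add]
  simp only [hle, (hrest _ j).le, if_true, sum_const, card_univ, Fintype.card_fin, smul_eq_mul,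
    mul_one, ← card_filter]
  rw [show ({j' | j' ≤ j} : Finset (Fin k)) = Finset.Iic j by ext; simp, Fin.card_Iic]
  ring

lemma ofReal_mul_le_withDensity {α : Type*} [MeasurableSpace α] {μ : Measure α} {f : α → ℝ}
    {δ : ℝ} {s : Set α} (hs : MeasurableSet s) (hf : ∀ x ∈ s, δ ≤ f x) :
    ENNReal.ofReal δ * μ s ≤ μ.withDensity (fun x => ENNReal.ofReal (f x)) s := by
  rw [withDensity_apply _ hs, ← setLIntegral_const]
  exact setLIntegral_mono' hs fun x hx => ENNReal.ofReal_le_ofReal (hf x hx)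

lemma lintegral_eq_top_of_le_setLIntegral {α ι : Type*} [MeasurableSpace α] [Countable ι]
    [Infinite ι] {μ : Measure α} {g : α → ENNReal} {S : ι → Set α}
    (hS : ∀ k, MeasurableSet (S k)) (hd : Pairwise (Disjoint on S)) {c : ENNReal} (hc : c ≠ 0)
    (hle : ∀ k, c ≤ ∫⁻ x in S k, g x ∂μ) :
    ∫⁻ x, g x ∂μ = ⊤ := by
  refine top_unique ?_
  calc ⊤ = ∑' _ : ι, c := (ENNReal.tsum_const_eq_top_of_ne_zero hc).symm
    _ ≤ ∑' k, ∫⁻ x in S k, g x ∂μ := ENNReal.tsum_le_tsum hle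
    _ = ∫⁻ x in ⋃ k, S k, g x ∂μ := (lintegral_iUnion hS hd g).symm
    _ ≤ ∫⁻ x, g x ∂μ := setLIntegral_le_lintegral _ _

lemma lpd2Slope_eq_quadInterpCoeffs {m : ℕ} {K : ℝ → ℝ} {h xR : ℝ} (hh : 0 < h)
    (hK_supp : ∀ u, u ∉ Icc (-1 : ℝ) 1 → K u = 0) (hK_pos : ∀ u ∈ Ioc (-1 : ℝ) 0, 0 < K u)
    (ω : Fin (3 + m) → ℝ) (hmono : StrictMono (ω ∘ Fin.castAdd m))
    (hwin : ∀ j, ω (Fin.castAdd m j) ∈ Ioo (xR - h) xR)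
    (hrest : ∀ i, ω (Fin.natAdd 3 i) < xR - h) :
    lpd2Slope (3 + m) K h xR ω = quadInterpCoeffs (fun j => ω (Fin.castAdd m j) - xR)
      (fun j => ((3 + m : ℕ) : ℝ)⁻¹ * ((m + j + 1 : ℕ) : ℝ)) 1 := by
  have hw_out : ∀ i, K ((ω (Fin.natAdd 3 i) - xR) / h) = 0 := fun i => hK_supp _ fun hmem => by
    have := (le_div_iff₀ hh).1 hmem.1
    linarith [hrest i]
  have hw_in : ∀ j, K ((ω (Fin.castAdd m j) - xR) / h) ≠ 0 := fun j => by
    obtain ⟨hl, hr⟩ := hwin j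
    exact (hK_pos _ ⟨(lt_div_iff₀ hh).2 (by linarith),
      div_nonpos_of_nonpos_of_nonneg (by linarith) hh.le⟩).ne'
  have hinj : Injective fun j => ω (Fin.castAdd m j) - xR :=
    fun j j' e => hmono.injective (sub_left_inj.1 e)
  have hcard : ∀ j, #{i | ω i ≤ ω (Fin.castAdd m j)} = m + j + 1 :=
    card_filter_le_castAdd ω hmono fun i j => (hrest i).trans (hwin j).1
  rw [lpd2Slope_eq_wlsPolyCoeffs, wlsPolyCoeffs_castAdd _ _ _ hw_out]
  refine congrFun (wlsPolyCoeffs_eq_of_interpolates hw_in hinj ?_) 1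
  convert vandermonde_mulVec_quadInterpCoeffs hinj _ using 2
  simp [hcard]

def spikeBox (m : ℕ) (xL xR h t : ℝ) : Set (Fin (3 + m) → ℝ) :=
  univ.pi <| Fin.append ![Ioo (xR - h) (xR - h + t), Ioo (xR - h + 2 * t) (xR - h + 3 * t),
    Ioo (xR - 7 * h / 8) (xR - 3 * h / 4)] fun _ => Ioo xL (xR - h)

section SpikeBox

variable {m : ℕ} {xL xR h t : ℝ}

lemma measurableSet_spikeBox : MeasurableSet (spikeBox m xL xR h t) := by
  refine MeasurableSet.univ_pi fun i => Fin.addCases (fun j => ?_) (fun i => ?_) i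
  · fin_cases j <;> simp [measurableSet_Ioo]
  · simp [measurableSet_Ioo]

lemma disjoint_spikeBox {t' : ℝ} (h32 : 3 * t' ≤ 2 * t) :
    Disjoint (spikeBox m xL xR h t) (spikeBox m xL xR h t') := by
  refine Set.disjoint_left.2 fun ω hω hω' => ?_
  have h₁ := Set.mem_univ_pi.1 hω (Fin.castAdd m 1)
  have h₁' := Set.mem_univ_pi.1 hω' (Fin.castAdd m 1)
  simp only [Fin.append_left, Fin.isValue, cons_val_one, cons_val_zero, Set.mem_Ioo] at h₁ h₁'
  linarith [h₁.1, h₁'.2]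

lemma measure_pi_spikeBox (μ : Measure ℝ) [SigmaFinite μ] :
    Measure.pi (fun _ => μ) (spikeBox m xL xR h t) =
      μ (Ioo (xR - h) (xR - h + t)) * μ (Ioo (xR - h + 2 * t) (xR - h + 3 * t)) *
        μ (Ioo (xR - 7 * h / 8) (xR - 3 * h / 4)) * μ (Ioo xL (xR - h)) ^ m := by
  simp [spikeBox, Measure.pi_pi, Fin.prod_univ_add, Fin.prod_univ_three]

/-- `96 t ≤ h` makes the gap between the first two points at most a third of the next gap, and
that gap at most a quarter of `2 xR - X₀ - X₁`, as `quadInterpCoeffs_one_le` needs. -/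
lemma lpd2Slope_le_of_mem_spikeBox {K : ℝ → ℝ} (hh : 0 < h)
    (hK_supp : ∀ u, u ∉ Icc (-1 : ℝ) 1 → K u = 0) (hK_pos : ∀ u ∈ Ioc (-1 : ℝ) 0, 0 < K u)
    (h96 : 96 * t ≤ h) {ω : Fin (3 + m) → ℝ} (hω : ω ∈ spikeBox m xL xR h t) :
    lpd2Slope (3 + m) K h xR ω ≤ -(((3 + m : ℕ) : ℝ) * (3 * t))⁻¹ := by
  have hx : ∀ j, ω (Fin.castAdd m j) ∈ _ := fun j => by
    simpa only [Fin.append_left] using Set.mem_univ_pi.1 hω (Fin.castAdd m j)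
  have hrest : ∀ i, ω (Fin.natAdd 3 i) ∈ Ioo xL (xR - h) := fun i => by
    simpa only [Fin.append_right] using Set.mem_univ_pi.1 hω (Fin.natAdd 3 i)
  obtain ⟨h0l, h0r⟩ := hx 0
  obtain ⟨h1l, h1r⟩ := hx 1
  obtain ⟨h2l, h2r⟩ := hx 2
  have hmono : StrictMono (ω ∘ Fin.castAdd m) := Fin.strictMono_iff_lt_succ.2 <|
    Fin.forall_fin_two.2 ⟨(by linarith : ω (Fin.castAdd m 0) < ω (Fin.castAdd m 1)),
      (by linarith : ω (Fin.castAdd m 1) < ω (Fin.castAdd m 2))⟩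
  have hwin : ∀ j, ω (Fin.castAdd m j) ∈ Ioo (xR - h) xR := fun j =>
    ⟨h0l.trans_le (hmono.monotone (Fin.zero_le j)),
      (hmono.monotone (Fin.le_last j)).trans_lt (by linarith : ω (Fin.castAdd m 2) < xR)⟩
  rw [lpd2Slope_eq_quadInterpCoeffs hh hK_supp hK_pos ω hmono hwin fun i => (hrest i).2]
  calc _ ≤ -(((3 + m : ℕ) : ℝ)⁻¹ /
          (ω (Fin.castAdd m 1) - xR - (ω (Fin.castAdd m 0) - xR))) := by
        refine quadInterpCoeffs_one_le (by positivity) ?_ ?_ ?_ ?_ ?_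
        · linarith
        · linarith
        · linarith
        · push_cast [Fin.val_one, Fin.val_zero]; ring
        · push_cast [Fin.val_two, Fin.val_one]; ring
    _ ≤ -(((3 + m : ℕ) : ℝ) * (3 * t))⁻¹ := by
        rw [neg_le_neg_iff, mul_inv, div_eq_mul_inv]
        gcongr
        · linarith
        · linarith

lemma le_setLIntegral_spikeBox {K f : ℝ → ℝ} {δ : ℝ} (hh : 0 < h)
    (hK_supp : ∀ u, u ∉ Icc (-1 : ℝ) 1 → K u = 0) (hK_pos : ∀ u ∈ Ioc (-1 : ℝ) 0, 0 < K u)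
    (ht : 0 < t) (h96 : 96 * t ≤ h) (hxL : xL < xR - h) (hδ : 0 < δ)
    (hf_lb : ∀ x ∈ Ico xL xR, δ ≤ f x) :
    ENNReal.ofReal
        ((δ / (3 * ((3 + m : ℕ) : ℝ))) ^ 2 * (δ * (h / 8)) * (δ * (xR - h - xL)) ^ m) ≤
      ∫⁻ ω in spikeBox m xL xR h t, ENNReal.ofReal (lpd2Slope (3 + m) K h xR ω ^ 2)
        ∂Measure.pi fun _ => volume.withDensity fun x => ENNReal.ofReal (f x) := by
  set μ := volume.withDensity fun x => ENNReal.ofReal (f x)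
  have hμ : ∀ {p q ℓ}, xL ≤ p → q ≤ xR → q - p = ℓ →
      ENNReal.ofReal (δ * ℓ) ≤ μ (Ioo p q) := by
    intro p q ℓ hp hq hℓ
    rw [ENNReal.ofReal_mul hδ.le, ← hℓ, ← Real.volume_Ioo]
    exact ofReal_mul_le_withDensity measurableSet_Ioo
      fun x hx => hf_lb x ⟨by linarith [hx.1], by linarith [hx.2]⟩
  have hgap : 0 < δ * (xR - h - xL) := mul_pos hδ (by linarith)
  set c := (((3 + m : ℕ) : ℝ) * (3 * t))⁻¹ ^ 2 with hc
  have hbox : ENNReal.ofReal ((δ * t) * (δ * t) * (δ * (h / 8)) * (δ * (xR - h - xL)) ^ m) ≤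
      Measure.pi (fun _ => μ) (spikeBox m xL xR h t) := by
    rw [measure_pi_spikeBox, ENNReal.ofReal_mul (by positivity),
      ENNReal.ofReal_mul (by positivity), ENNReal.ofReal_mul (by positivity),
      ENNReal.ofReal_pow hgap.le]
    gcongr <;> exact hμ (by linarith) (by linarith) (by ring)
  have hpoint : ∀ ω ∈ spikeBox m xL xR h t,
      ENNReal.ofReal c ≤ ENNReal.ofReal (lpd2Slope (3 + m) K h xR ω ^ 2) := fun ω hω => by
    refine ENNReal.ofReal_le_ofReal ?_
    have := pow_le_pow_left₀ (by positivity)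
      (le_neg_of_le_neg (lpd2Slope_le_of_mem_spikeBox hh hK_supp hK_pos h96 hω)) 2
    rwa [neg_sq] at this
  calc _ = ENNReal.ofReal c *
        ENNReal.ofReal ((δ * t) * (δ * t) * (δ * (h / 8)) * (δ * (xR - h - xL)) ^ m) := by
        rw [← ENNReal.ofReal_mul (by positivity), hc]
        congr 1
        field_simp
    _ ≤ ENNReal.ofReal c * Measure.pi (fun _ => μ) (spikeBox m xL xR h t) := by gcongr
    _ = ∫⁻ _ in spikeBox m xL xR h t, ENNReal.ofReal c ∂Measure.pi fun _ => μ :=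
        (setLIntegral_const _ _).symm
    _ ≤ _ := setLIntegral_mono' measurableSet_spikeBox hpoint

end SpikeBox

theorem lpd_quadratic_infinite_second_moment_general
    (n : ℕ) (hn : 3 ≤ n) (f K : ℝ → ℝ) (xL xR δ h : ℝ)
    (hδ : 0 < δ)
    (hf_lb : ∀ x ∈ Set.Ico xL xR, δ ≤ f x)
    (hK_supp : ∀ u, u ∉ Set.Icc (-1 : ℝ) 1 → K u = 0)
    (hK_pos : ∀ u ∈ Set.Ioc (-1 : ℝ) 0, 0 < K u)
    (hh : 0 < h) (hhlt : h < xR - xL) :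
    ∫⁻ ω, ENNReal.ofReal ((lpd2Slope n K h xR ω) ^ 2)
      ∂(Measure.pi fun _ : Fin n => volume.withDensity fun x => ENNReal.ofReal (f x)) = ⊤ := by
  obtain ⟨m, rfl⟩ : ∃ m, n = 3 + m := ⟨n - 3, by omega⟩
  have hdisj : ∀ ⦃k k' : ℕ⦄, k < k' → 3 * (h / 96 / 2 ^ k') ≤ 2 * (h / 96 / 2 ^ k) := by
    intro k k' hk
    have : (2 : ℝ) ^ (k + 1) ≤ 2 ^ k' := pow_le_pow_right₀ one_le_two hk
    rw [pow_succ] at this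
    field_simp
    linarith [pow_pos (two_pos : (0 : ℝ) < 2) k]
  have h96 : ∀ k : ℕ, 96 * (h / 96 / 2 ^ k) ≤ h := fun k => by
    rw [show 96 * (h / 96 / 2 ^ k) = h / 2 ^ k by ring]
    exact div_le_self hh.le (one_le_pow₀ one_le_two)
  have hC : 0 < (δ / (3 * ((3 + m : ℕ) : ℝ))) ^ 2 * (δ * (h / 8)) * (δ * (xR - h - xL)) ^ m :=
    mul_pos (by positivity) (pow_pos (mul_pos hδ (by linarith)) _)
  exact lintegral_eq_top_of_le_setLIntegral (fun _ => measurableSet_spikeBox)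
    ((pairwise_disjoint_on _).2 fun k k' hk => disjoint_spikeBox (hdisj hk))
    (ENNReal.ofReal_pos.2 hC).ne' fun k => le_setLIntegral_spikeBox hh hK_supp hK_pos
      (by positivity) (h96 k) (by linarith) hδ hf_lb

/-- Corollary 1: Let `X₁, …, Xₙ` be i.i.d. with density `f` on `[x_L, x_R)`,
`0 < δ ≤ f ≤ Δ`, and let `K` be nonnegative and compactly supported (vanishing outside
`[-1,1]`, positive on `(-1,0]`). Then the local quadratic (p = 2) local polynomial density
estimator at `x_R` does not have a finite second moment. -/
theorem lpd_quadratic_infinite_second_moment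
    (n : ℕ) (hn : 3 ≤ n) (f K : ℝ → ℝ) (xL xR δ Δ h : ℝ)
    (hδ : 0 < δ) (hΔ : δ ≤ Δ)
    (hf_meas : Measurable f)
    (hf_supp : ∀ x, x ∉ Set.Ico xL xR → f x = 0)
    (hf_lb : ∀ x ∈ Set.Ico xL xR, δ ≤ f x)
    (hf_ub : ∀ x ∈ Set.Ico xL xR, f x ≤ Δ)
    (hf_dens : ∫ x, f x = 1)
    (hK_nonneg : ∀ u, 0 ≤ K u)
    (hK_compact : HasCompactSupport K)
    (hK_supp : ∀ u, u ∉ Set.Icc (-1 : ℝ) 1 → K u = 0)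
    (hK_pos : ∀ u ∈ Set.Ioc (-1 : ℝ) 0, 0 < K u)
    (hh : 0 < h) (hhlt : h < xR - xL) :
    ∫⁻ ω, ENNReal.ofReal ((lpd2Slope n K h xR ω) ^ 2)
      ∂(Measure.pi fun _ : Fin n => volume.withDensity fun x => ENNReal.ofReal (f x)) = ⊤ :=
  lpd_quadratic_infinite_second_moment_general n hn f K xL xR δ h hδ hf_lb hK_supp hK_pos hh hhlt
end
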